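/- arXiv:2308.10472 — 8 statements merged into one kernel-verified Lean document; each statement's English description precedes it below -/
import Mathlib

section
/- Let A be an n×n real matrix and let 1 ≤ m ≤ n. There exist m mutually orthogonal nonzero vectors x₁,…,x_m ∈ ℝⁿ with ⟨xᵢ, A xᵢ⟩ > 0 for all i = 1,…,m if and only if there exists a positive-definite real n×n matrix D such that 0 is an eigenvalue of A − D of algebraic multiplicity at least m. -/
open Matrix Polynomial

private lemma charmatrix_conj' {n : ℕ} (Q M : Matrix (Fin n) (Fin n) ℝ)
    (h1 : Qᵀ * Q = 1) :
    charmatrix (Qᵀ * M * Q) = Qᵀ.map C * charmatrix M * Q.map C := by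
  have hmap : ∀ (P N : Matrix (Fin n) (Fin n) ℝ),
      (P * N).map (C : ℝ → ℝ[X]) = P.map C * N.map C := fun P N =>
    Matrix.map_mul (f := (C : ℝ →+* ℝ[X]))
  rw [charmatrix, charmatrix, mul_sub, sub_mul, scalar_apply]
  congr 1
  · rw [← Matrix.smul_eq_mul_diagonal, Matrix.smul_mul, ← hmap, h1]
    simp [Matrix.smul_eq_diagonal_mul]
  · rw [RingHom.mapMatrix_apply, hmap, hmap]; rfl

private lemma charpoly_conj' {n : ℕ} (Q M : Matrix (Fin n) (Fin n) ℝ)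
    (h1 : Qᵀ * Q = 1) (h2 : Q * Qᵀ = 1) :
    (Qᵀ * M * Q).charpoly = M.charpoly := by
  have hmap : ∀ (P N : Matrix (Fin n) (Fin n) ℝ),
      (P * N).map (C : ℝ → ℝ[X]) = P.map C * N.map C := fun P N =>
    Matrix.map_mul (f := (C : ℝ →+* ℝ[X]))
  rw [Matrix.charpoly, Matrix.charpoly, charmatrix_conj' Q M h1, det_mul, det_mul,
    mul_comm, ← mul_assoc, ← det_mul, ← hmap, h2]
  simp

private lemma charpoly_zero_col {k : ℕ} (B : Matrix (Fin (k+1)) (Fin (k+1)) ℝ)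
    (h : ∀ i, B i 0 = 0) :
    B.charpoly = X * (B.submatrix Fin.succ Fin.succ).charpoly := by
  have hsub : (charmatrix B).submatrix Fin.succ Fin.succ
      = charmatrix (B.submatrix Fin.succ Fin.succ) := by
    ext i j
    by_cases hij : i = j
    · subst hij; simp [charmatrix_apply_eq]
    · rw [submatrix_apply, charmatrix_apply_ne _ _ _ (by simpa using hij),
        charmatrix_apply_ne _ _ _ hij, submatrix_apply]
  rw [Matrix.charpoly, det_succ_column_zero, Fintype.sum_eq_single (0 : Fin (k+1))]
  · rw [charmatrix_apply_eq, h 0]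
    simp [Matrix.charpoly, Fin.succAbove_zero, hsub]
  · intro i hi
    rw [charmatrix_apply_ne _ _ _ hi, h i]
    simp

private lemma X_pow_dvd_charpoly_of_tri : ∀ (m n : ℕ), m ≤ n →
    ∀ N : Matrix (Fin n) (Fin n) ℝ,
    (∀ i j : Fin n, (j : ℕ) < m → (j : ℕ) ≤ (i : ℕ) → N i j = 0) →
    X ^ m ∣ N.charpoly := by
  intro m
  induction m with
  | zero => intro n _ N _; simp
  | succ m ih =>
    intro n hmn N hN
    obtain ⟨k, rfl⟩ : ∃ k, n = k + 1 := ⟨n - 1, by omega⟩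
    have hcol : ∀ i, N i 0 = 0 := fun i => hN i 0 (Nat.succ_pos m) (Nat.zero_le _)
    rw [charpoly_zero_col N hcol, pow_succ']
    refine mul_dvd_mul_left X (ih k (by omega) _ ?_)
    intro i j hj hij
    exact hN i.succ j.succ (by simpa using hj) (by simpa using hij)

private lemma dot_mulVec_conj {n : ℕ} (Q M : Matrix (Fin n) (Fin n) ℝ) (a c : Fin n → ℝ) :
    a ⬝ᵥ (Qᵀ * M * Q) *ᵥ c = (Q *ᵥ a) ⬝ᵥ M *ᵥ (Q *ᵥ c) := by
  rw [← mulVec_mulVec, ← mulVec_mulVec, dotProduct_mulVec a Qᵀ, vecMul_transpose]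

private lemma dot_Q_preserve {n : ℕ} {Q : Matrix (Fin n) (Fin n) ℝ} (h1 : Qᵀ * Q = 1)
    (a c : Fin n → ℝ) : (Q *ᵥ a) ⬝ᵥ (Q *ᵥ c) = a ⬝ᵥ c := by
  have := dot_mulVec_conj Q 1 a c
  rw [Matrix.mul_one, h1, one_mulVec, one_mulVec] at this
  exact this.symm

private lemma orthQ {n : ℕ} (b : OrthonormalBasis (Fin n) ℝ (EuclideanSpace ℝ (Fin n))) :
    (Matrix.of fun i j => (b j : Fin n → ℝ) i)ᵀ * (Matrix.of fun i j => (b j : Fin n → ℝ) i)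
      = 1 := by
  ext i j
  have := orthonormal_iff_ite.mp b.orthonormal i j
  simp only [PiLp.inner_apply, RCLike.inner_apply, starRingEnd_apply, star_trivial] at this
  simp only [Matrix.mul_apply, transpose_apply, Matrix.of_apply, Matrix.one_apply]
  rw [← this]
  exact Finset.sum_congr rfl fun _ _ => mul_comm _ _

private lemma mulVec_single_col {n : ℕ} (Q : Matrix (Fin n) (Fin n) ℝ) (j : Fin n) :
    Q *ᵥ Pi.single j 1 = fun i => Q i j := by
  funext i
  simp [mulVec, dotProduct_single]

private lemma cons_dot_cons {k : ℕ} (z w : Fin k → ℝ) :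
    (Fin.cons 0 z : Fin (k+1) → ℝ) ⬝ᵥ (Fin.cons 0 w) = z ⬝ᵥ w := by
  simp [dotProduct, Fin.sum_univ_succ]

private lemma cons_dot_mulVec {k : ℕ} (B : Matrix (Fin (k+1)) (Fin (k+1)) ℝ)
    (z w : Fin k → ℝ) :
    (Fin.cons 0 z : Fin (k+1) → ℝ) ⬝ᵥ B *ᵥ (Fin.cons 0 w)
      = z ⬝ᵥ (B.submatrix Fin.succ Fin.succ) *ᵥ w := by
  have hm : B *ᵥ (Fin.cons 0 w : Fin (k+1) → ℝ)
      = fun p => ∑ q, B p q.succ * w q := by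
    funext p
    rw [mulVec, dotProduct, Fin.sum_univ_succ]
    simp
  rw [hm, dotProduct, Fin.sum_univ_succ]
  simp [dotProduct, mulVec, submatrix_apply]

private lemma exists_orthonormal_zero_diag :
    ∀ (m n : ℕ) (M : Matrix (Fin n) (Fin n) ℝ), X ^ m ∣ M.charpoly →
    ∃ x : Fin m → Fin n → ℝ,
      (∀ i j, x i ⬝ᵥ x j = if i = j then 1 else 0) ∧ (∀ i, x i ⬝ᵥ M *ᵥ x i = 0) := by
  intro m
  induction m with
  | zero => exact fun n M _ => ⟨Fin.elim0, fun i => i.elim0, fun i => i.elim0⟩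
  | succ m ih =>
    intro n M hdvd
    have hn : m + 1 ≤ n := by
      have h1 : (X ^ (m+1) : ℝ[X]).natDegree ≤ M.charpoly.natDegree :=
        Polynomial.natDegree_le_of_dvd hdvd M.charpoly_monic.ne_zero
      simpa [Matrix.charpoly_natDegree_eq_dim] using h1
    obtain ⟨k, rfl⟩ : ∃ k, n = k + 1 := ⟨n - 1, by omega⟩
    have hdet : M.det = 0 := by
      have hX : (X : ℝ[X]) ∣ M.charpoly := dvd_trans (dvd_pow_self X (Nat.succ_ne_zero m)) hdvd
      have h0 : M.charpoly.coeff 0 = 0 := Polynomial.X_dvd_iff.mp hX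
      rw [Matrix.det_eq_sign_charpoly_coeff, h0, mul_zero]
    obtain ⟨u, hu0, huM⟩ := (Matrix.exists_mulVec_eq_zero_iff).mpr hdet
    set c : ℝ := (Real.sqrt (u ⬝ᵥ u))⁻¹ with hc
    have hupos : 0 < u ⬝ᵥ u := by
      have hnn : 0 ≤ u ⬝ᵥ u := Finset.sum_nonneg fun i _ => mul_self_nonneg (u i)
      rcases lt_or_eq_of_le hnn with h | h
      · exact h
      · exact absurd (dotProduct_self_eq_zero.mp h.symm) hu0
    set u' : Fin (k+1) → ℝ := c • u with hu'
    have hu'dot : u' ⬝ᵥ u' = 1 := by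
      rw [hu', smul_dotProduct, dotProduct_smul, smul_eq_mul, smul_eq_mul, hc, ← mul_assoc,
        ← mul_inv, Real.mul_self_sqrt (le_of_lt hupos), inv_mul_cancel₀ (ne_of_gt hupos)]
    have hu'M : M *ᵥ u' = 0 := by
      rw [hu', mulVec_smul, huM, smul_zero]
    have hcard : Module.finrank ℝ (EuclideanSpace ℝ (Fin (k+1))) = Fintype.card (Fin (k+1)) := by
      simp
    set uE : EuclideanSpace ℝ (Fin (k+1)) := (EuclideanSpace.equiv (Fin (k+1)) ℝ).symm u'
      with huE
    have horth : Orthonormal ℝ (Set.restrict {(0 : Fin (k+1))}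
        (fun _ => uE : Fin (k+1) → EuclideanSpace ℝ (Fin (k+1)))) := by
      rw [orthonormal_iff_ite]
      rintro ⟨i, hi⟩ ⟨j, hj⟩
      have heq : (⟨i, hi⟩ : ({(0 : Fin (k+1))} : Set (Fin (k+1)))) = ⟨j, hj⟩ :=
        Subtype.ext (show i = j by
          simp only [Set.mem_singleton_iff] at hi hj
          rw [hi, hj])
      rw [if_pos heq]
      change inner ℝ uE uE = 1
      simp only [PiLp.inner_apply, RCLike.inner_apply, conj_trivial]
      simpa [huE, dotProduct, mul_comm] using hu'dot
    obtain ⟨b, hb⟩ := horth.exists_orthonormalBasis_extension_of_card_eq hcard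
    have hb0 : (b 0 : Fin (k+1) → ℝ) = u' := by
      have h := hb 0 rfl
      funext i
      have := congrFun (congrArg (fun (z : EuclideanSpace ℝ (Fin (k+1))) => (z : Fin (k+1) → ℝ)) h) i
      simpa [huE] using this
    set Q : Matrix (Fin (k+1)) (Fin (k+1)) ℝ := Matrix.of fun i j => (b j : Fin (k+1) → ℝ) i
      with hQ
    have hQ1 : Qᵀ * Q = 1 := orthQ b
    have hQ2 : Q * Qᵀ = 1 := mul_eq_one_comm.mp hQ1
    set B : Matrix (Fin (k+1)) (Fin (k+1)) ℝ := Qᵀ * M * Q with hB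
    have hQcol : ∀ j, Q *ᵥ Pi.single j 1 = (b j : Fin (k+1) → ℝ) := by
      intro j; rw [mulVec_single_col]; rfl
    have hBcol : ∀ i, B i 0 = 0 := by
      intro i
      have h1 : B *ᵥ Pi.single (0 : Fin (k+1)) 1 = 0 := by
        rw [hB, ← mulVec_mulVec, ← mulVec_mulVec, hQcol, hb0, hu'M, mulVec_zero]
      have h2 := congrFun h1 i
      rw [mulVec_single_col] at h2
      simpa using h2
    have hchar : M.charpoly = B.charpoly := (charpoly_conj' Q M hQ1 hQ2).symm
    set B' : Matrix (Fin k) (Fin k) ℝ := B.submatrix Fin.succ Fin.succ with hB'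
    have hdvd' : X ^ m ∣ B'.charpoly := by
      have h3 : X * X ^ m ∣ X * B'.charpoly := by
        rw [← pow_succ']
        rw [hchar, charpoly_zero_col B hBcol] at hdvd
        exact hdvd
      exact (mul_dvd_mul_iff_left (Polynomial.X_ne_zero (R := ℝ))).mp h3
    obtain ⟨y, hyo, hyM⟩ := ih k B' hdvd'
    have hu'col : Q *ᵥ Pi.single 0 1 = u' := by rw [hQcol 0, hb0]
    refine ⟨Fin.cons u' (fun i => Q *ᵥ Fin.cons 0 (y i)), ?_, ?_⟩
    · intro i j
      induction i using Fin.cases with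
      | zero =>
        induction j using Fin.cases with
        | zero => simpa using hu'dot
        | succ j' =>
          rw [if_neg (Fin.succ_ne_zero j').symm]
          rw [Fin.cons_zero, Fin.cons_succ, ← hu'col, dot_Q_preserve hQ1]
          simp [single_dotProduct]
      | succ i' =>
        induction j using Fin.cases with
        | zero =>
          rw [if_neg (Fin.succ_ne_zero i')]
          rw [Fin.cons_zero, Fin.cons_succ, ← hu'col, dotProduct_comm, dot_Q_preserve hQ1]
          simp [single_dotProduct]
        | succ j' =>
          rw [Fin.cons_succ, Fin.cons_succ, dot_Q_preserve hQ1, cons_dot_cons, hyo]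
          by_cases h : i' = j' <;> simp [h, Fin.succ_inj]
    · intro i
      induction i using Fin.cases with
      | zero =>
        rw [Fin.cons_zero, hu'M]
        simp
      | succ i' =>
        rw [Fin.cons_succ, ← dot_mulVec_conj, ← hB, cons_dot_mulVec, ← hB']
        exact hyM i'

/-- A real square matrix (not necessarily symmetric) is positive-definite if
`xᵀ D x > 0` for every nonzero vector `x`. -/
def IsPosDefMat {n : ℕ} (D : Matrix (Fin n) (Fin n) ℝ) : Prop :=
  ∀ x : Fin n → ℝ, x ≠ 0 → 0 < x ⬝ᵥ D *ᵥ x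

private lemma inner_eq_dot {n : ℕ} (x y : EuclideanSpace ℝ (Fin n)) :
    (inner ℝ x y : ℝ) = (x : Fin n → ℝ) ⬝ᵥ (y : Fin n → ℝ) := by
  simp [PiLp.inner_apply, RCLike.inner_apply, dotProduct, mul_comm]

private lemma single_dot_mulVec_single {n : ℕ} (B : Matrix (Fin n) (Fin n) ℝ) (p q : Fin n) :
    Pi.single p 1 ⬝ᵥ B *ᵥ Pi.single q 1 = B p q := by
  rw [mulVec_single_col, single_dotProduct, one_mul]

theorem statement0 {n m : ℕ} (A : Matrix (Fin n) (Fin n) ℝ) (hm : 1 ≤ m) (hmn : m ≤ n) :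
    (∃ x : Fin m → (Fin n → ℝ),
        (∀ i, x i ≠ 0) ∧
        (∀ i j, i ≠ j → x i ⬝ᵥ x j = 0) ∧
        (∀ i, 0 < x i ⬝ᵥ A *ᵥ x i)) ↔
      (∃ D : Matrix (Fin n) (Fin n) ℝ, IsPosDefMat D ∧ X ^ m ∣ (A - D).charpoly) := by
  constructor
  · rintro ⟨x, hx0, hxorth, hxpos⟩
    -- normalize
    set v : Fin m → Fin n → ℝ := fun i => (Real.sqrt (x i ⬝ᵥ x i))⁻¹ • x i with hv
    have hxx : ∀ i, 0 < x i ⬝ᵥ x i := by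
      intro i
      have hnn : 0 ≤ x i ⬝ᵥ x i := Finset.sum_nonneg fun p _ => mul_self_nonneg (x i p)
      rcases lt_or_eq_of_le hnn with h | h
      · exact h
      · exact absurd (dotProduct_self_eq_zero.mp h.symm) (hx0 i)
    have hvdot : ∀ i j, v i ⬝ᵥ v j = if i = j then 1 else 0 := by
      intro i j
      by_cases h : i = j
      · subst h
        rw [if_pos rfl, hv]
        simp only [smul_dotProduct, dotProduct_smul, smul_eq_mul]
        rw [← mul_assoc, ← mul_inv, Real.mul_self_sqrt (le_of_lt (hxx i)),
          inv_mul_cancel₀ (ne_of_gt (hxx i))]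
      · rw [if_neg h, hv]
        simp only [smul_dotProduct, dotProduct_smul, smul_eq_mul]
        rw [hxorth i j h, mul_zero, mul_zero]
    have hvpos : ∀ i, 0 < v i ⬝ᵥ A *ᵥ v i := by
      intro i
      rw [hv]
      simp only [smul_dotProduct, mulVec_smul, dotProduct_smul, smul_eq_mul]
      have hc : 0 < (Real.sqrt (x i ⬝ᵥ x i))⁻¹ :=
        inv_pos.mpr (Real.sqrt_pos.mpr (hxx i))
      exact mul_pos hc (mul_pos hc (hxpos i))
    -- extend to orthonormal basis
    set vE : Fin m → EuclideanSpace ℝ (Fin n) :=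
      fun i => (EuclideanSpace.equiv (Fin n) ℝ).symm (v i) with hvE
    set s : Set (Fin n) := {j | (j : ℕ) < m} with hs
    set v' : Fin n → EuclideanSpace ℝ (Fin n) :=
      fun j => if h : (j : ℕ) < m then vE ⟨(j : ℕ), h⟩ else 0 with hv'
    have hcard : Module.finrank ℝ (EuclideanSpace ℝ (Fin n)) = Fintype.card (Fin n) := by simp
    have hv'val : ∀ (j : Fin n) (hj : (j : ℕ) < m), (v' j : Fin n → ℝ) = v ⟨(j : ℕ), hj⟩ := by
      intro j hj
      simp only [hv']
      rw [dif_pos hj]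
      rfl
    have horth : Orthonormal ℝ (s.restrict v') := by
      rw [orthonormal_iff_ite]
      rintro ⟨i, hi⟩ ⟨j, hj⟩
      have hi' : (i : ℕ) < m := hi
      have hj' : (j : ℕ) < m := hj
      change inner ℝ (v' i) (v' j) = _
      rw [inner_eq_dot, hv'val i hi', hv'val j hj',
        hvdot]
      by_cases h : i = j
      · subst h
        rw [if_pos rfl, if_pos rfl]
      · rw [if_neg (fun hh : (⟨(i : ℕ), hi'⟩ : Fin m) = ⟨(j : ℕ), hj'⟩ =>
            h (Fin.ext (show (i : ℕ) = (j : ℕ) by injection hh))),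
          if_neg (fun hh => h (Subtype.ext_iff.mp hh))]
    obtain ⟨b, hb⟩ := horth.exists_orthonormalBasis_extension_of_card_eq hcard
    have hbi : ∀ i : Fin m, (b (Fin.castLE hmn i) : Fin n → ℝ) = v i := by
      intro i
      have hmem : (Fin.castLE hmn i : Fin n) ∈ s := i.isLt
      have h : b (Fin.castLE hmn i) = v' (Fin.castLE hmn i) := hb _ hmem
      have h2 := hv'val (Fin.castLE hmn i) (by simpa using i.isLt)
      have h3 : (⟨((Fin.castLE hmn i : Fin n) : ℕ), by simpa using i.isLt⟩ : Fin m) = i :=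
        Fin.ext (by simp)
      rw [show (b (Fin.castLE hmn i) : Fin n → ℝ) = (v' (Fin.castLE hmn i) : Fin n → ℝ) from
        congrArg WithLp.ofLp h, h2, h3]
    set Q : Matrix (Fin n) (Fin n) ℝ := Matrix.of fun p j => (b j : Fin n → ℝ) p with hQ
    have hQ1 : Qᵀ * Q = 1 := orthQ b
    have hQ2 : Q * Qᵀ = 1 := mul_eq_one_comm.mp hQ1
    set B : Matrix (Fin n) (Fin n) ℝ := Qᵀ * A * Q with hB
    have hQcol : ∀ j, Q *ᵥ Pi.single j 1 = (b j : Fin n → ℝ) := by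
      intro j; rw [mulVec_single_col]; rfl
    have hBdiag : ∀ p : Fin n, (p : ℕ) < m → 0 < B p p := by
      intro p hp
      have h1 : B p p = Pi.single p 1 ⬝ᵥ B *ᵥ Pi.single p 1 :=
        (single_dot_mulVec_single B p p).symm
      rw [h1, hB, dot_mulVec_conj, hQcol]
      have hpc : p = Fin.castLE hmn ⟨(p : ℕ), hp⟩ := Fin.ext rfl
      rw [hpc, hbi]
      exact hvpos _
    -- define C
    set C : Matrix (Fin n) (Fin n) ℝ := Matrix.of fun p q =>
      if (q : ℕ) < m ∧ (q : ℕ) ≤ (p : ℕ) then B p q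
      else if (p : ℕ) < m ∧ (p : ℕ) < (q : ℕ) then -(B q p)
      else if p = q then 1 else 0 with hC
    have hCsym : ∀ p q, p ≠ q → C p q + C q p = 0 := by
      intro p q hpq
      have hpq' : (p : ℕ) ≠ (q : ℕ) := fun h => hpq (Fin.ext h)
      simp only [hC, Matrix.of_apply]
      by_cases h1 : (q : ℕ) < m ∧ (q : ℕ) ≤ (p : ℕ)
      · rw [if_pos h1, if_neg (fun h : (p : ℕ) < m ∧ (p : ℕ) ≤ (q : ℕ) => hpq' (by omega)),
          if_pos (show (q : ℕ) < m ∧ (q : ℕ) < (p : ℕ) by omega)]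
        ring
      · rw [if_neg h1]
        by_cases h2 : (p : ℕ) < m ∧ (p : ℕ) < (q : ℕ)
        · rw [if_pos h2, if_pos (show (p : ℕ) < m ∧ (p : ℕ) ≤ (q : ℕ) by omega)]
          ring
        · rw [if_neg h2, if_neg hpq,
            if_neg (fun h : (p : ℕ) < m ∧ (p : ℕ) ≤ (q : ℕ) => h2 (by omega)),
            if_neg (fun h : (q : ℕ) < m ∧ (q : ℕ) < (p : ℕ) => h1 (by omega)),
            if_neg (fun h : q = p => hpq h.symm)]
          ring
    have hCdiag : ∀ p, 0 < C p p := by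
      intro p
      simp only [hC, Matrix.of_apply]
      split_ifs with h1 h2 h3
      · exact hBdiag p h1.1
      · omega
      · exact one_pos
    have hBC : ∀ p q : Fin n, (q : ℕ) < m → (q : ℕ) ≤ (p : ℕ) → (B - C) p q = 0 := by
      intro p q h1 h2
      simp only [Matrix.sub_apply, hC, Matrix.of_apply, if_pos (And.intro h1 h2), sub_self]
    set D : Matrix (Fin n) (Fin n) ℝ := Q * C * Qᵀ with hD
    have hconjC : ∀ N : Matrix (Fin n) (Fin n) ℝ, Q * N * Qᵀ = Qᵀᵀ * N * Qᵀ := by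
      intro N; rw [transpose_transpose]
    have hQT1 : (Qᵀ)ᵀ * Qᵀ = 1 := by rw [transpose_transpose]; exact hQ2
    have hQT2 : Qᵀ * (Qᵀ)ᵀ = 1 := by rw [transpose_transpose]; exact hQ1
    refine ⟨D, ?_, ?_⟩
    · intro y hy
      have hz : y ⬝ᵥ D *ᵥ y = (Qᵀ *ᵥ y) ⬝ᵥ C *ᵥ (Qᵀ *ᵥ y) := by
        rw [hD, hconjC, dot_mulVec_conj]
      set z := Qᵀ *ᵥ y with hzdef
      have hz0 : z ≠ 0 := by
        intro h0
        apply hy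
        have : Q *ᵥ z = y := by
          rw [hzdef, mulVec_mulVec, hQ2, one_mulVec]
        rw [← this, h0, mulVec_zero]
      have hzC : z ⬝ᵥ Cᵀ *ᵥ z = z ⬝ᵥ C *ᵥ z := by
        rw [dotProduct_mulVec z Cᵀ z, vecMul_transpose, dotProduct_comm]
      have hdiagsum : C + Cᵀ = Matrix.diagonal fun p => 2 * C p p := by
        ext p q
        by_cases h : p = q
        · subst h; simp [Matrix.diagonal_apply_eq]; ring
        · rw [Matrix.add_apply, Matrix.transpose_apply, Matrix.diagonal_apply_ne _ h]
          exact hCsym p q h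
      have h2z : 2 * (z ⬝ᵥ C *ᵥ z) = z ⬝ᵥ (Matrix.diagonal fun p => 2 * C p p) *ᵥ z := by
        rw [← hdiagsum, Matrix.add_mulVec, dotProduct_add, hzC]
        ring
      have hpos : 0 < z ⬝ᵥ (Matrix.diagonal fun p => 2 * C p p) *ᵥ z := by
        have hexp : z ⬝ᵥ (Matrix.diagonal fun p => 2 * C p p) *ᵥ z
            = ∑ p, 2 * C p p * (z p * z p) := by
          simp [dotProduct, Matrix.mulVec_diagonal]
          congr 1
          funext p
          ring
        rw [hexp]
        obtain ⟨q, hq⟩ : ∃ q, z q ≠ 0 := by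
          by_contra h
          push_neg at h
          exact hz0 (funext h)
        refine Finset.sum_pos' (fun p _ => ?_) ⟨q, Finset.mem_univ q, ?_⟩
        · exact mul_nonneg (by linarith [hCdiag p]) (mul_self_nonneg _)
        · have h1 := hCdiag q
          have h2 : 0 < z q * z q := mul_self_pos.mpr hq
          exact mul_pos (by linarith) h2
      rw [hz]
      nlinarith [h2z, hpos]
    · have hA : Q * B * Qᵀ = A := by
        rw [hB, ← Matrix.mul_assoc, ← Matrix.mul_assoc, hQ2, Matrix.one_mul,
          Matrix.mul_assoc, hQ2, Matrix.mul_one]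
      have hAD : A - D = Qᵀᵀ * (B - C) * Qᵀ := by
        rw [← hA, hD, transpose_transpose, Matrix.mul_sub, Matrix.sub_mul]
      rw [hAD, charpoly_conj' Qᵀ (B - C) hQT1 hQT2]
      exact X_pow_dvd_charpoly_of_tri m n hmn (B - C) hBC
  · rintro ⟨D, hDpos, hdvd⟩
    obtain ⟨x, hxo, hxM⟩ := exists_orthonormal_zero_diag m n (A - D) hdvd
    refine ⟨x, ?_, ?_, ?_⟩
    · intro i h0
      have := hxo i i
      rw [if_pos rfl, h0] at this
      simp at this
    · intro i j hij
      rw [hxo i j, if_neg hij]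
    · intro i
      have hsplit : x i ⬝ᵥ A *ᵥ x i = x i ⬝ᵥ (A - D) *ᵥ x i + x i ⬝ᵥ D *ᵥ x i := by
        rw [Matrix.sub_mulVec, dotProduct_sub]
        ring
      have hne : x i ≠ 0 := by
        intro h0
        have := hxo i i
        rw [if_pos rfl, h0] at this
        simp at this
      rw [hsplit, hxM i, zero_add]
      exact hDpos (x i) hne
end

section
/- Let L be a real symmetric N×N matrix with eigenvalues λ₁,…,λ_N listed with multiplicity, let A and D be real n×n matrices, and let α ∈ ℝ. Then the characteristic polynomial of the Nn×Nn matrix Id_N ⊗ A − α (L ⊗ D) equals the product over p = 1,…,N of the characteristic polynomials of the matrices A − αλ_p D. -/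
open Matrix Polynomial
open scoped Kronecker

section Aux

variable {R : Type*} [CommRing R]

lemma charmatrix_blockDiagonal' {ι m : Type*} [Fintype ι] [DecidableEq ι] [Fintype m]
    [DecidableEq m] (M : ι → Matrix m m R) :
    charmatrix (blockDiagonal M) = blockDiagonal (fun i => charmatrix (M i)) := by
  ext ⟨i, p⟩ ⟨j, q⟩
  by_cases h : p = q
  · subst h
    by_cases h2 : i = j
    · subst h2; simp [charmatrix_apply, blockDiagonal_apply]
    · simp [charmatrix_apply, blockDiagonal_apply, diagonal_apply, Prod.ext_iff, h2]
  · simp [charmatrix_apply, blockDiagonal_apply, diagonal_apply, Prod.ext_iff, h]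

lemma charpoly_blockDiagonal' {ι m : Type*} [Fintype ι] [DecidableEq ι] [Fintype m]
    [DecidableEq m] (M : ι → Matrix m m R) :
    (blockDiagonal M).charpoly = ∏ i, (M i).charpoly := by
  rw [Matrix.charpoly, charmatrix_blockDiagonal', det_blockDiagonal]
  rfl

lemma charpoly_conj'_s6 {m : Type*} [Fintype m] [DecidableEq m] (M U V : Matrix m m R)
    (hUV : U * V = 1) (hVU : V * U = 1) :
    (U * M * V).charpoly = M.charpoly := by
  have h1 : (U.map C) * (V.map C) = 1 := by
    rw [← Matrix.map_mul, hUV, Matrix.map_one _ (map_zero _) (map_one _)]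
  have h2 : (V.map C) * (U.map C) = 1 := by
    rw [← Matrix.map_mul, hVU, Matrix.map_one _ (map_zero _) (map_one _)]
  have hc : charmatrix (U * M * V) = (U.map C) * charmatrix M * (V.map C) := by
    rw [charmatrix, charmatrix]
    have hs : U.map C * Matrix.scalar m (X : R[X]) * V.map C = Matrix.scalar m (X : R[X]) := by
      rw [(Matrix.scalar_commute (X : R[X]) (fun r' => Commute.all _ _) (U.map C)).symm.eq,
        Matrix.mul_assoc, h1, Matrix.mul_one]
    simp only [RingHom.mapMatrix_apply, Matrix.mul_sub, Matrix.sub_mul, hs, Matrix.map_mul]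
  rw [Matrix.charpoly, hc, det_mul, det_mul, mul_comm, ← mul_assoc, ← det_mul, h2, det_one,
    one_mul, Matrix.charpoly]

lemma charpoly_diagonal' {m : Type*} [Fintype m] [DecidableEq m] [LinearOrder m] (d : m → R) :
    (diagonal d).charpoly = ∏ i, (X - C (d i)) := by
  rw [Matrix.charpoly_of_upperTriangular _ (Matrix.blockTriangular_diagonal d)]
  simp

end Aux

theorem statement6 {N n : ℕ} (L : Matrix (Fin N) (Fin N) ℝ) (hL : L.IsSymm)
    (lam : Fin N → ℝ)
    (hlam : L.charpoly = ∏ p, (X - C (lam p)))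
    (A D : Matrix (Fin n) (Fin n) ℝ) (α : ℝ) :
    ((1 : Matrix (Fin N) (Fin N) ℝ) ⊗ₖ A - α • (L ⊗ₖ D)).charpoly
      = ∏ p, (A - (α * lam p) • D).charpoly := by
  have hH : L.IsHermitian := by
    rw [Matrix.IsHermitian, Matrix.conjTranspose]
    ext i j
    simpa using hL.apply i j
  set U : Matrix (Fin N) (Fin N) ℝ := (hH.eigenvectorUnitary : Matrix (Fin N) (Fin N) ℝ) with hU
  set μ : Fin N → ℝ := hH.eigenvalues with hμ
  have hUsU : U * star U = 1 := (Matrix.mem_unitaryGroup_iff).mp hH.eigenvectorUnitary.2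
  have hsUU : star U * U = 1 := (Matrix.mem_unitaryGroup_iff').mp hH.eigenvectorUnitary.2
  have hspec : L = U * diagonal μ * star U := by
    have := hH.spectral_theorem
    simpa using this
  -- the block-diagonal core
  set B : Matrix (Fin N × Fin n) (Fin N × Fin n) ℝ :=
    (1 : Matrix (Fin N) (Fin N) ℝ) ⊗ₖ A - α • (diagonal μ ⊗ₖ D) with hB
  have hsim : (1 : Matrix (Fin N) (Fin N) ℝ) ⊗ₖ A - α • (L ⊗ₖ D)
      = (U ⊗ₖ (1 : Matrix (Fin n) (Fin n) ℝ)) * B * (star U ⊗ₖ 1) := by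
    rw [hB, Matrix.mul_sub, Matrix.mul_smul, Matrix.sub_mul, Matrix.smul_mul]
    rw [← Matrix.mul_kronecker_mul, ← Matrix.mul_kronecker_mul,
      ← Matrix.mul_kronecker_mul, ← Matrix.mul_kronecker_mul]
    rw [Matrix.mul_one, Matrix.one_mul, Matrix.mul_one, hUsU, ← hspec, Matrix.one_mul, Matrix.mul_one]
  have hBre : B = Matrix.reindex (Equiv.prodComm (Fin n) (Fin N)) (Equiv.prodComm (Fin n) (Fin N))
      (blockDiagonal fun p => A - (α * μ p) • D) := by
    ext ⟨p, i⟩ ⟨q, j⟩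
    by_cases h : p = q
    · subst h
      simp [hB, blockDiagonal_apply, Matrix.one_apply, diagonal_apply, kroneckerMap_apply]
      ring
    · simp [hB, blockDiagonal_apply, Matrix.one_apply, diagonal_apply, kroneckerMap_apply, h,
        Ne.symm h]
  have hcore : B.charpoly = ∏ p, (A - (α * μ p) • D).charpoly := by
    rw [hBre, Matrix.charpoly_reindex, charpoly_blockDiagonal']
  have hmain : ((1 : Matrix (Fin N) (Fin N) ℝ) ⊗ₖ A - α • (L ⊗ₖ D)).charpoly
      = ∏ p, (A - (α * μ p) • D).charpoly := by
    rw [hsim, charpoly_conj'_s6 _ _ _ (by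
        rw [← Matrix.mul_kronecker_mul, hUsU, Matrix.mul_one, Matrix.one_kronecker_one])
      (by rw [← Matrix.mul_kronecker_mul, hsUU, Matrix.mul_one, Matrix.one_kronecker_one]),
      hcore]
  -- eigenvalue multiset matching
  have hLchar : L.charpoly = ∏ p, (X - C (μ p)) := by
    rw [hspec, charpoly_conj'_s6 _ _ _ hUsU hsUU, charpoly_diagonal']
  have hmult : (Finset.univ.val.map lam) = (Finset.univ.val.map μ) := by
    have h1 : ((Finset.univ.val.map lam).map fun a => X - C a).prod
        = ((Finset.univ.val.map μ).map fun a => X - C a).prod := by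
      rw [Multiset.map_map, Multiset.map_map]
      show (∏ p, (X - C (lam p))) = ∏ p, (X - C (μ p))
      rw [← hlam, hLchar]
    have := congrArg Polynomial.roots h1
    rwa [Polynomial.roots_multiset_prod_X_sub_C, Polynomial.roots_multiset_prod_X_sub_C] at this
  rw [hmain]
  have : ∀ f : Fin N → ℝ, ∏ p, (A - (α * f p) • D).charpoly
      = ((Finset.univ.val.map f).map fun a => (A - (α * a) • D).charpoly).prod := by
    intro f
    rw [Multiset.map_map]
    rfl
  rw [this, this, hmult]
end

section
/- Let G be a connected finite simple undirected graph on N ≥ 2 vertices with Laplacian matrix L_G, and let A be an n×n real matrix for which there exist m mutually orthogonal nonzero vectors x₁,…,x_m ∈ ℝⁿ with ⟨xᵢ, A xᵢ⟩ > 0 for all i. Then there exist a positive-definite real n×n matrix D and a real number α* > 0 such that 0 is an eigenvalue of the Nn×Nn matrix Id_N ⊗ A − α* (L_G ⊗ D) of algebraic multiplicity at least m. -/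
open Matrix Polynomial
open scoped Kronecker

lemma dot_self_nonneg {k : ℕ} (p : Fin k → ℝ) : 0 ≤ p ⬝ᵥ p :=
  Finset.sum_nonneg fun _ _ => mul_self_nonneg _

lemma dot_amgm {k : ℕ} (ε : ℝ) (hε : 0 < ε) (p q : Fin k → ℝ) :
    -(ε * (p ⬝ᵥ p) + (q ⬝ᵥ q) / ε) / 2 ≤ p ⬝ᵥ q := by
  have h := dot_self_nonneg (ε • p + q)
  simp only [dotProduct_add, add_dotProduct, smul_dotProduct, dotProduct_smul,
    dotProduct_comm q p, smul_eq_mul] at h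
  have h2 : (q ⬝ᵥ q) / ε * ε = q ⬝ᵥ q := div_mul_cancel₀ _ (ne_of_gt hε)
  nlinarith [h, hε, h2]

lemma sum_mulVec {k l : ℕ} {ι : Type*} (s : Finset ι) (M : ι → Matrix (Fin k) (Fin l) ℝ)
    (y : Fin l → ℝ) : (∑ i ∈ s, M i) *ᵥ y = ∑ i ∈ s, (M i *ᵥ y) := by
  funext a
  simp only [Matrix.mulVec, dotProduct, Matrix.sum_apply, Finset.sum_apply,
    Finset.sum_mul]
  rw [Finset.sum_comm]

lemma vecMulVec_mulVec {k l : ℕ} (a : Fin k → ℝ) (b : Fin l → ℝ) (y : Fin l → ℝ) :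
    Matrix.vecMulVec a b *ᵥ y = (b ⬝ᵥ y) • a := by
  funext i
  simp [Matrix.mulVec, Matrix.vecMulVec_apply, dotProduct, Finset.mul_sum, mul_comm,
    mul_left_comm, smul_eq_mul]

lemma dot_sum {k : ℕ} {ι : Type*} (s : Finset ι) (v : Fin k → ℝ) (w : ι → (Fin k → ℝ)) :
    v ⬝ᵥ (∑ i ∈ s, w i) = ∑ i ∈ s, v ⬝ᵥ w i := by
  simp only [dotProduct, Finset.sum_apply, Finset.mul_sum]
  rw [Finset.sum_comm]

lemma sum_dot {k : ℕ} {ι : Type*} (s : Finset ι) (v : Fin k → ℝ) (w : ι → (Fin k → ℝ)) :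
    (∑ i ∈ s, w i) ⬝ᵥ v = ∑ i ∈ s, w i ⬝ᵥ v := by
  rw [dotProduct_comm, dot_sum]
  exact Finset.sum_congr rfl fun i _ => dotProduct_comm _ _

lemma tri_swap {k : ℕ} (f : Fin k → Fin k → ℝ) :
    ∑ i, ∑ j ∈ Finset.Ioi i, f i j = ∑ i, ∑ j ∈ Finset.Iio i, f j i := by
  rw [Finset.sum_sigma', Finset.sum_sigma']
  refine Finset.sum_nbij' (fun p => ⟨p.2, p.1⟩) (fun p => ⟨p.2, p.1⟩) ?_ ?_ ?_ ?_ ?_ <;>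
    simp [Finset.mem_sigma, Finset.mem_Ioi, Finset.mem_Iio]

lemma sum_split {k : ℕ} (f : Fin k → Fin k → ℝ) :
    ∑ i, ∑ j, f i j = (∑ i, f i i) + ∑ i, ∑ j ∈ Finset.Iio i, (f i j + f j i) := by
  have h1 : ∀ i : Fin k, ∑ j, f i j
      = f i i + (∑ j ∈ Finset.Ioi i, f i j + ∑ j ∈ Finset.Iio i, f i j) := by
    intro i
    rw [← Finset.sum_disjUnion (Finset.disjoint_Ioi_Iio i), Finset.Ioi_disjUnion_Iio,
      ← Finset.sum_compl_add_sum {i} (f i), Finset.sum_singleton, add_comm]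
  simp only [h1, Finset.sum_add_distrib, tri_swap f]
  ring

lemma exists_D {n m : ℕ} (A : Matrix (Fin n) (Fin n) ℝ)
    (x : Fin m → (Fin n → ℝ)) (hx0 : ∀ i, x i ≠ 0)
    (hxorth : ∀ i j, i ≠ j → x i ⬝ᵥ x j = 0)
    (hxpos : ∀ i, 0 < x i ⬝ᵥ A *ᵥ x i) :
    ∃ (D : Matrix (Fin n) (Fin n) ℝ) (γ : Fin m → Fin m → ℝ), IsPosDefMat D ∧
      ∀ k, D *ᵥ x k = A *ᵥ x k - ∑ j ∈ Finset.Iio k, γ k j • x j := by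
  set c : Fin m → ℝ := fun i => x i ⬝ᵥ x i with hcdef
  have hc : ∀ i, 0 < c i := fun i =>
    (dot_self_nonneg (x i)).lt_of_ne (Ne.symm fun h => hx0 i (dotProduct_self_eq_zero.mp h))
  set S : Fin m → Fin m → ℝ := fun i j => x j ⬝ᵥ A *ᵥ x i with hSdef
  set q : Fin m → ℝ := fun i => x i ⬝ᵥ A *ᵥ x i with hqdef
  set r : Fin m → ℝ := fun i => (A *ᵥ x i) ⬝ᵥ (A *ᵥ x i) with hrdef
  have hr : ∀ i, 0 ≤ r i := fun i => dot_self_nonneg _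
  set ε : Fin m → ℝ := fun i => r i / q i + 1 with hεdef
  have hε : ∀ i, 0 < ε i := fun i => by
    have := div_nonneg (hr i) (le_of_lt (hxpos i)); simp only [hεdef]; linarith
  set t : ℝ := (∑ i, ε i) / 2 + 1 with htdef
  have ht1 : (1:ℝ) ≤ t := by
    have : 0 ≤ ∑ i, ε i := Finset.sum_nonneg fun i _ => (hε i).le
    simp only [htdef]; linarith
  set γ : Fin m → Fin m → ℝ := fun i j => (S i j + S j i) / c j with hγdef
  set g : Fin m → (Fin n → ℝ) :=
    fun i => A *ᵥ x i - (∑ j ∈ Finset.Iio i, γ i j • x j) - t • x i with hgdef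
  set D : Matrix (Fin n) (Fin n) ℝ :=
    t • (1 : Matrix (Fin n) (Fin n) ℝ) + ∑ i, (c i)⁻¹ • Matrix.vecMulVec (g i) (x i) with hDdef
  have hD : ∀ y, D *ᵥ y = t • y + ∑ i, ((c i)⁻¹ * (x i ⬝ᵥ y)) • g i := by
    intro y
    rw [hDdef, Matrix.add_mulVec, Matrix.smul_mulVec, Matrix.one_mulVec, sum_mulVec]
    congr 1
    refine Finset.sum_congr rfl fun i _ => ?_
    rw [Matrix.smul_mulVec, vecMulVec_mulVec, smul_smul]
  have hDx : ∀ k, D *ᵥ x k = A *ᵥ x k - ∑ j ∈ Finset.Iio k, γ k j • x j := by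
    intro k
    rw [hD]
    rw [Finset.sum_eq_single k (fun i _ hik => by rw [hxorth i k hik, mul_zero, zero_smul])
      (fun h => absurd (Finset.mem_univ k) h)]
    rw [inv_mul_cancel₀ (hc k).ne', one_smul, hgdef]
    module
  refine ⟨D, γ, ?_, hDx⟩
  intro y hy
  set a : Fin m → ℝ := fun i => (x i ⬝ᵥ y) / c i with hadef
  set u : Fin n → ℝ := ∑ i, a i • x i with hudef
  set w : Fin n → ℝ := y - u with hwdef
  have hyw : y = w + u := by rw [hwdef]; abel
  have hxy : ∀ i, x i ⬝ᵥ y = a i * c i := fun i => (div_mul_cancel₀ _ (hc i).ne').symm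
  have hxu : ∀ i, x i ⬝ᵥ u = a i * c i := by
    intro i
    rw [hudef, dot_sum]
    rw [Finset.sum_eq_single i (fun j _ hji => by
        rw [dotProduct_smul, hxorth i j (Ne.symm hji), smul_zero])
      (fun h => absurd (Finset.mem_univ i) h)]
    rw [dotProduct_smul, smul_eq_mul, mul_comm]
  have hxw : ∀ i, x i ⬝ᵥ w = 0 := fun i => by
    rw [hwdef, dotProduct_sub, hxy, hxu, sub_self]
  have hwx : ∀ i, w ⬝ᵥ x i = 0 := fun i => by rw [dotProduct_comm, hxw]
  have huu : u ⬝ᵥ u = ∑ i, a i ^ 2 * c i := by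
    rw [hudef, sum_dot]
    refine Finset.sum_congr rfl fun i _ => ?_
    rw [smul_dotProduct, smul_eq_mul, ← hudef, hxu]; ring
  have hwu : w ⬝ᵥ u = 0 := by
    rw [hudef, dot_sum]
    exact Finset.sum_eq_zero fun i _ => by rw [dotProduct_smul, hwx, smul_zero]
  have huw : u ⬝ᵥ w = 0 := by rw [dotProduct_comm, hwu]
  have hyy : y ⬝ᵥ y = w ⬝ᵥ w + ∑ i, a i ^ 2 * c i := by
    rw [hyw, dotProduct_add, add_dotProduct, add_dotProduct, huw, hwu, huu]; ring
  set B : Fin m → ℝ := fun i => w ⬝ᵥ (A *ᵥ x i) with hBdef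
  have hyA : ∀ i, y ⬝ᵥ (A *ᵥ x i) = B i + ∑ j, a j * S i j := by
    intro i
    rw [hyw, add_dotProduct, hudef, sum_dot]
    congr 1
    exact Finset.sum_congr rfl fun j _ => by rw [smul_dotProduct, smul_eq_mul]
  have hyx : ∀ j, y ⬝ᵥ x j = a j * c j := fun j => by rw [dotProduct_comm, hxy]
  have hγ' : ∀ i j, γ i j * (y ⬝ᵥ x j) = a j * (S i j + S j i) := by
    intro i j
    calc γ i j * (y ⬝ᵥ x j) = (S i j + S j i) / c j * (a j * c j) := by rw [hyx, hγdef]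
    _ = a j * (S i j + S j i) * (c j / c j) := by ring
    _ = a j * (S i j + S j i) := by rw [div_self (hc j).ne', mul_one]
  have hyg : ∀ i, y ⬝ᵥ g i
      = (B i + ∑ j, a j * S i j) - (∑ j ∈ Finset.Iio i, a j * (S i j + S j i))
        - t * (a i * c i) := by
    intro i
    rw [hgdef]
    simp only [dotProduct_sub, dotProduct_smul, smul_eq_mul]
    rw [hyA, hyx, dot_sum]
    congr 2
    refine Finset.sum_congr rfl fun j _ => ?_
    rw [dotProduct_smul, smul_eq_mul, ← hγ' i j, hyx]
  have coef : ∀ i, (c i)⁻¹ * (x i ⬝ᵥ y) = a i := by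
    intro i; rw [hxy, mul_comm ((c i)⁻¹), mul_assoc, mul_inv_cancel₀ (hc i).ne', mul_one]
  have main : y ⬝ᵥ D *ᵥ y = t * (w ⬝ᵥ w) + ∑ i, a i ^ 2 * q i + ∑ i, a i * B i := by
    rw [hD y, dotProduct_add, dotProduct_smul, smul_eq_mul, hyy, dot_sum]
    have hterm : ∀ i ∈ Finset.univ, y ⬝ᵥ (((c i)⁻¹ * (x i ⬝ᵥ y)) • g i)
        = a i * B i + (∑ j, a i * (a j * S i j))
          - (∑ j ∈ Finset.Iio i, a i * (a j * (S i j + S j i))) - t * (a i ^ 2 * c i) := by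
      intro i _
      rw [dotProduct_smul, smul_eq_mul, coef i, hyg i, ← Finset.mul_sum, ← Finset.mul_sum]
      ring
    rw [Finset.sum_congr rfl hterm]
    rw [Finset.sum_sub_distrib, Finset.sum_sub_distrib, Finset.sum_add_distrib]
    have hsplit := sum_split (fun i j => a i * (a j * S i j))
    have e2 : ∑ i, a i * (a i * S i i) = ∑ i, a i ^ 2 * q i :=
      Finset.sum_congr rfl fun i _ => by rw [hqdef, hSdef]; ring
    have e3 : ∑ i, ∑ j ∈ Finset.Iio i,
          (a i * (a j * S i j) + a j * (a i * S j i))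
        = ∑ i, ∑ j ∈ Finset.Iio i, a i * (a j * (S i j + S j i)) :=
      Finset.sum_congr rfl fun i _ => Finset.sum_congr rfl fun j _ => by ring
    rw [e2, e3] at hsplit
    rw [← Finset.mul_sum]
    linear_combination hsplit
  -- lower bound on cross terms
  set W : ℝ := w ⬝ᵥ w with hWdef
  have hW0 : 0 ≤ W := dot_self_nonneg w
  have hbound : ∀ i ∈ Finset.univ, -(ε i * W + a i ^ 2 * (r i / ε i)) / 2 ≤ a i * B i := by
    intro i _
    have h := dot_amgm (ε i) (hε i) w (a i • (A *ᵥ x i))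
    have h1 : w ⬝ᵥ (a i • (A *ᵥ x i)) = a i * B i := by
      rw [dotProduct_smul, smul_eq_mul]
    have h2 : (a i • (A *ᵥ x i)) ⬝ᵥ (a i • (A *ᵥ x i)) = a i ^ 2 * r i := by
      rw [smul_dotProduct, dotProduct_smul, smul_eq_mul, smul_eq_mul]
      have hrr : A *ᵥ x i ⬝ᵥ A *ᵥ x i = r i := rfl
      rw [hrr]; ring
    rw [h1, h2] at h
    calc -(ε i * W + a i ^ 2 * (r i / ε i)) / 2
        = -(ε i * W + a i ^ 2 * r i / ε i) / 2 := by rw [mul_div_assoc]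
      _ ≤ a i * B i := h
  have hsum : ∑ i, (-(ε i * W + a i ^ 2 * (r i / ε i)) / 2) ≤ ∑ i, a i * B i :=
    Finset.sum_le_sum hbound
  have hsum2 : ∑ i, (-(ε i * W + a i ^ 2 * (r i / ε i)) / 2)
      = -((∑ i, ε i) * W + ∑ i, a i ^ 2 * (r i / ε i)) / 2 := by
    rw [← Finset.sum_div, Finset.sum_neg_distrib, Finset.sum_add_distrib, ← Finset.sum_mul]
  have hrq : ∀ i ∈ Finset.univ, a i ^ 2 * (r i / ε i) ≤ a i ^ 2 * q i := by
    intro i _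
    apply mul_le_mul_of_nonneg_left _ (sq_nonneg (a i))
    rw [div_le_iff₀ (hε i)]
    have hq := hxpos i
    have hεq : q i * ε i = r i + q i := by
      rw [hεdef]
      simp only
      rw [mul_add, mul_one, mul_div_cancel₀ _ (ne_of_gt hq)]
    nlinarith [hq]
  have hrqsum : ∑ i, a i ^ 2 * (r i / ε i) ≤ ∑ i, a i ^ 2 * q i := Finset.sum_le_sum hrq
  set Q : ℝ := ∑ i, a i ^ 2 * q i with hQdef
  have hQ0 : 0 ≤ Q := Finset.sum_nonneg fun i _ => mul_nonneg (sq_nonneg _) (hxpos i).le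
  have hlow : W + Q / 2 ≤ y ⬝ᵥ D *ᵥ y := by
    rw [main]
    have hE : (∑ i, ε i) / 2 = t - 1 := by rw [htdef]; ring
    nlinarith [hsum, hsum2, hrqsum, hW0, hQ0]
  have hpos : 0 < W + Q / 2 := by
    by_cases hw : w = 0
    · have hex : ∃ i, a i ≠ 0 := by
        by_contra hall
        push_neg at hall
        apply hy
        rw [hyw, hw, hudef]
        simp [hall]
      obtain ⟨i, hai⟩ := hex
      have hQpos : 0 < Q := by
        refine Finset.sum_pos' (fun j _ => mul_nonneg (sq_nonneg _) (hxpos j).le) ?_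
        exact ⟨i, Finset.mem_univ i, mul_pos (pow_two_pos_of_ne_zero hai) (hxpos i)⟩
      linarith
    · have hWpos : 0 < W :=
        (dot_self_nonneg w).lt_of_ne (Ne.symm fun h => hw (dotProduct_self_eq_zero.mp h))
      linarith
  linarith

lemma kron_mulVec {N n : ℕ} (A : Matrix (Fin N) (Fin N) ℝ) (B : Matrix (Fin n) (Fin n) ℝ)
    (v : Fin N → ℝ) (z : Fin n → ℝ) :
    (A ⊗ₖ B) *ᵥ (fun p => v p.1 * z p.2) = fun p => (A *ᵥ v) p.1 * (B *ᵥ z) p.2 := by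
  funext p
  simp only [Matrix.mulVec, dotProduct, Matrix.kroneckerMap_apply, Fintype.sum_prod_type]
  rw [Finset.sum_mul_sum]
  apply Finset.sum_congr rfl; intro j _
  apply Finset.sum_congr rfl; intro l _
  ring

lemma aux_charpoly_dvd {K : Type*} [Fintype K] [DecidableEq K] (M : Matrix K K ℝ) {m : ℕ}
    (y : Fin m → (K → ℝ)) (hy : LinearIndependent ℝ y)
    (hker : ∀ i, ((Matrix.toLin' M) ^ m) (y i) = 0) :
    X ^ m ∣ M.charpoly := by
  set φ : Module.End ℝ (K → ℝ) := Matrix.toLin' M with hφ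
  have hmem : ∀ i, y i ∈ φ.maxGenEigenspace 0 := fun i => by
    rw [Module.End.mem_maxGenEigenspace]
    exact ⟨m, by simpa using hker i⟩
  set V := φ.maxGenEigenspace 0 with hV
  have hy' : LinearIndependent ℝ (fun i => (⟨y i, hmem i⟩ : V)) := by
    apply LinearIndependent.of_comp V.subtype
    exact hy
  have hfin : m ≤ Module.finrank ℝ V := by
    simpa using hy'.fintype_card_le_finrank
  have h1 : φ.charpoly = M.charpoly := by
    rw [← LinearMap.charpoly_toMatrix φ (Pi.basisFun ℝ K), LinearMap.toMatrix_eq_toMatrix',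
      LinearMap.toMatrix'_toLin']
  rw [← h1, Polynomial.X_pow_dvd_iff]
  intro d hd
  apply Polynomial.coeff_eq_zero_of_lt_natTrailingDegree
  have h2 := LinearMap.finrank_maxGenEigenspace_zero_eq φ
  rw [← hV] at h2
  omega

theorem statement8 {N n m : ℕ} (hN : 2 ≤ N)
    (G : SimpleGraph (Fin N)) [DecidableRel G.Adj] (hG : G.Connected)
    (A : Matrix (Fin n) (Fin n) ℝ)
    (x : Fin m → (Fin n → ℝ)) (hx0 : ∀ i, x i ≠ 0)
    (hxorth : ∀ i j, i ≠ j → x i ⬝ᵥ x j = 0)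
    (hxpos : ∀ i, 0 < x i ⬝ᵥ A *ᵥ x i) :
    ∃ (D : Matrix (Fin n) (Fin n) ℝ) (αs : ℝ), IsPosDefMat D ∧ 0 < αs ∧
      X ^ m ∣ ((1 : Matrix (Fin N) (Fin N) ℝ) ⊗ₖ A
                - αs • ((G.lapMatrix ℝ) ⊗ₖ D)).charpoly := by
  obtain ⟨D, γ, hDpos, hDx⟩ := exists_D A x hx0 hxorth hxpos
  set L := G.lapMatrix ℝ with hLdef
  have hpsd : L.PosSemidef := SimpleGraph.posSemidef_lapMatrix ℝ G
  have hherm : L.IsHermitian := hpsd.1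
  have hLne : L ≠ 0 := by
    intro h0
    set z : Fin N → ℝ := fun i => ((i : ℕ) : ℝ) with hzdef
    have h1 : Matrix.toLin' L z = 0 := by rw [h0]; simp
    rw [hLdef, Matrix.toLin'_apply, SimpleGraph.lapMatrix_mulVec_eq_zero_iff_forall_reachable] at h1
    have hreach := hG.preconnected ⟨0, by omega⟩ ⟨1, by omega⟩
    have h2 := h1 ⟨0, by omega⟩ ⟨1, by omega⟩ hreach
    rw [hzdef] at h2
    norm_num at h2
  obtain ⟨v, lam, hlam0, hv0, hLv⟩ := hherm.exists_eigenvector_of_ne_zero hLne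
  have hvv : 0 < v ⬝ᵥ v :=
    (dot_self_nonneg v).lt_of_ne (Ne.symm fun h => hv0 (dotProduct_self_eq_zero.mp h))
  have hlampos : 0 < lam := by
    have h2 := hpsd.dotProduct_mulVec_nonneg v
    rw [star_trivial, hLv, dotProduct_smul, smul_eq_mul] at h2
    have hnn : 0 ≤ lam := by nlinarith [h2, hvv]
    exact hnn.lt_of_ne (Ne.symm hlam0)
  have hll : lam⁻¹ * lam = 1 := inv_mul_cancel₀ hlam0
  refine ⟨D, lam⁻¹, hDpos, inv_pos.mpr hlampos, ?_⟩
  set Mbig := (1 : Matrix (Fin N) (Fin N) ℝ) ⊗ₖ A - lam⁻¹ • (L ⊗ₖ D) with hMdef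
  set y : Fin m → (Fin N × Fin n → ℝ) := fun i => fun p => v p.1 * x i p.2 with hydef
  have hstep : ∀ i, Mbig *ᵥ (y i) = ∑ j ∈ Finset.Iio i, γ i j • y j := by
    intro i
    have e1 : ((1 : Matrix (Fin N) (Fin N) ℝ) ⊗ₖ A) *ᵥ (y i)
        = fun p => v p.1 * (A *ᵥ x i) p.2 := by
      rw [show y i = fun p => v p.1 * x i p.2 from rfl, kron_mulVec, Matrix.one_mulVec]
    have e2 : (L ⊗ₖ D) *ᵥ (y i) = fun p => lam * v p.1 * ((D *ᵥ x i) p.2) := by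
      rw [show y i = fun p => v p.1 * x i p.2 from rfl, kron_mulVec, hLv]
      funext p
      simp only [Pi.smul_apply, smul_eq_mul]
    rw [hMdef, Matrix.sub_mulVec, Matrix.smul_mulVec, e1, e2]
    funext p
    simp only [Pi.sub_apply, Pi.smul_apply, smul_eq_mul, Finset.sum_apply]
    rw [hDx i]
    simp only [Pi.sub_apply, Finset.sum_apply, Pi.smul_apply, smul_eq_mul]
    have hms : v p.1 * (∑ j ∈ Finset.Iio i, γ i j * x j p.2)
        = ∑ j ∈ Finset.Iio i, γ i j * (v p.1 * x j p.2) := by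
      rw [Finset.mul_sum]; exact Finset.sum_congr rfl fun j _ => by ring
    rw [show (∑ j ∈ Finset.Iio i, γ i j * (fun p => v p.1 * x j p.2) p)
        = ∑ j ∈ Finset.Iio i, γ i j * (v p.1 * x j p.2) from rfl]
    rw [← hms]
    field_simp
    ring
  set φ : Module.End ℝ (Fin N × Fin n → ℝ) := Matrix.toLin' Mbig with hφdef
  have hφstep : ∀ i, φ (y i) = ∑ j ∈ Finset.Iio i, γ i j • y j := by
    intro i
    rw [hφdef, Matrix.toLin'_apply]
    exact hstep i
  have hnil : ∀ k : ℕ, ∀ i : Fin m, (i : ℕ) < k → (φ ^ k) (y i) = 0 := by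
    intro k
    induction k with
    | zero => exact fun i h => absurd h (by omega)
    | succ k ih =>
      intro i hi
      rw [pow_succ, Module.End.mul_apply, hφstep i, map_sum]
      refine Finset.sum_eq_zero fun j hj => ?_
      have hj' : j < i := Finset.mem_Iio.mp hj
      have hji : (j : ℕ) < (i : ℕ) := hj'
      rw [_root_.map_smul, ih j (by omega), smul_zero]
  have hker : ∀ i, (φ ^ m) (y i) = 0 := fun i => hnil m i i.isLt
  have hxli : LinearIndependent ℝ x := by
    rw [Fintype.linearIndependent_iff]
    intro g hg j
    have h1 : (∑ i, g i • x i) ⬝ᵥ x j = 0 := by rw [hg, zero_dotProduct]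
    rw [sum_dot, Finset.sum_eq_single j
      (fun i _ hij => by rw [smul_dotProduct, hxorth i j hij, smul_zero])
      (fun h => absurd (Finset.mem_univ j) h), smul_dotProduct, smul_eq_mul] at h1
    have hcj : 0 < x j ⬝ᵥ x j :=
      (dot_self_nonneg (x j)).lt_of_ne (Ne.symm fun h => hx0 j (dotProduct_self_eq_zero.mp h))
    exact (mul_eq_zero.mp h1).resolve_right (ne_of_gt hcj)
  obtain ⟨p1, hp1⟩ : ∃ k, v k ≠ 0 := by
    by_contra hall
    push_neg at hall
    exact hv0 (funext hall)
  let T : (Fin n → ℝ) →ₗ[ℝ] (Fin N × Fin n → ℝ) :=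
    { toFun := fun z => fun p => v p.1 * z p.2
      map_add' := fun z1 z2 => by funext p; simp [mul_add]
      map_smul' := fun cc z => by
        funext p
        show v p.1 * (cc * z p.2) = cc * (v p.1 * z p.2)
        ring }
  have hTker : LinearMap.ker T = ⊥ := by
    rw [LinearMap.ker_eq_bot']
    intro z hz
    funext l
    have h3 : v p1 * z l = 0 := congrFun hz (p1, l)
    exact (mul_eq_zero.mp h3).resolve_left hp1
  have hyli : LinearIndependent ℝ y := hxli.map' T hTker
  exact aux_charpoly_dvd Mbig y hyli hker
end

section
/- Let r < C be positive integers and let G be a finite simple undirected graph consisting of one vertex of degree C and N ≥ 1 further vertices each of degree at most r. If (C+1)/r > N^{1/3} + 1, then the largest eigenvalue of the Laplacian L_G is simple, and every eigenvector v = (ν₀, ν₁, …, ν_N) of this largest eigenvalue satisfies ∑_{i=0}^{N} νᵢ^ℓ ≠ 0 for every integer ℓ ≥ 2. -/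
open Matrix Polynomial

theorem herm_charpoly' {n : Type*} [Fintype n] [DecidableEq n] {A : Matrix n n ℝ}
    (hA : A.IsHermitian) :
    A.charpoly = ∏ i, (X - Polynomial.C (hA.eigenvalues i)) := by
  set U := (Matrix.IsHermitian.eigenvectorUnitary hA : Matrix n n ℝ) with hUdef
  have hUU : U * star U = 1 := Matrix.mem_unitaryGroup_iff.mp (Matrix.IsHermitian.eigenvectorUnitary hA).2
  have hspec : A = U * Matrix.diagonal hA.eigenvalues * star U := by
    simpa using hA.spectral_theorem
  set P := (C : ℝ →+* ℝ[X]).mapMatrix U with hP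
  set Q := (C : ℝ →+* ℝ[X]).mapMatrix (star U) with hQ
  have hmap : P * Q = 1 := by
    rw [hP, hQ, ← RingHom.map_mul, hUU, RingHom.map_one]
  have hkey : charmatrix A = P * charmatrix (Matrix.diagonal hA.eigenvalues) * Q := by
    unfold charmatrix
    rw [mul_sub, sub_mul]
    congr 1
    · rw [← Matrix.scalar_commute X (fun r' => Commute.all X r') P, mul_assoc, hmap, mul_one]
    · rw [congrArg (C : ℝ →+* ℝ[X]).mapMatrix hspec, RingHom.map_mul, RingHom.map_mul]
  have hQP : Q * P = 1 := mul_eq_one_comm.mp hmap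
  have hdiag : charmatrix (Matrix.diagonal hA.eigenvalues) =
      Matrix.diagonal (fun i => X - Polynomial.C (hA.eigenvalues i)) := by
    ext i j
    by_cases h : i = j
    · subst h; simp [charmatrix_apply_eq]
    · rw [charmatrix_apply_ne _ _ _ h, Matrix.diagonal_apply_ne _ h, Matrix.diagonal_apply_ne _ h,
        map_zero, neg_zero]
  rw [Matrix.charpoly, hkey, det_mul, det_mul, mul_comm, ← mul_assoc, ← det_mul, hQP, det_one,
    one_mul, hdiag, det_diagonal]

theorem rm_prod' {n : Type*} [Fintype n] (μ : n → ℝ) (a : ℝ) :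
    rootMultiplicity a (∏ i, (X - Polynomial.C (μ i))) =
      (Finset.univ.filter (fun i => μ i = a)).card := by
  classical
  have hprod : (∏ i, (X - Polynomial.C (μ i))) =
      ((Finset.univ.val.map μ).map (fun b => X - Polynomial.C b)).prod := by
    rw [Multiset.map_map, Finset.prod_eq_multiset_prod]
    rfl
  have hroots : (∏ i, (X - Polynomial.C (μ i))).roots = Finset.univ.val.map μ := by
    rw [hprod, Polynomial.roots_multiset_prod_X_sub_C]
  rw [← Polynomial.count_roots, hroots, Multiset.count_map]
  rw [Finset.card_filter]
  simp [Finset.sum_boole, eq_comm]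
  rfl

theorem shift_psd' {n : Type*} [Fintype n] [DecidableEq n] {A : Matrix n n ℝ}
    (hA : A.IsHermitian) {lam : ℝ} (h : ∀ i, hA.eigenvalues i ≤ lam) :
    (lam • (1 : Matrix n n ℝ) - A).PosSemidef := by
  set U := (Matrix.IsHermitian.eigenvectorUnitary hA : Matrix n n ℝ) with hUdef
  have hUU : U * star U = 1 := Matrix.mem_unitaryGroup_iff.mp (Matrix.IsHermitian.eigenvectorUnitary hA).2
  have hspec : A = U * Matrix.diagonal hA.eigenvalues * star U := by
    simpa using hA.spectral_theorem
  have key : lam • (1 : Matrix n n ℝ) - A =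
      U * Matrix.diagonal (fun i => lam - hA.eigenvalues i) * Uᴴ := by
    have hd : Matrix.diagonal (fun i => lam - hA.eigenvalues i) =
        lam • (1 : Matrix n n ℝ) - Matrix.diagonal hA.eigenvalues := by
      ext i j
      by_cases h : i = j
      · subst h; simp [Matrix.one_apply_eq]
      · simp [Matrix.diagonal_apply_ne _ h, Matrix.one_apply_ne h]
    rw [hd, Matrix.mul_sub, Matrix.sub_mul, Matrix.mul_smul, Matrix.smul_mul, mul_one,
      ← Matrix.star_eq_conjTranspose, hUU, ← hspec]
  rw [key]
  exact (Matrix.posSemidef_diagonal_iff.mpr (fun i => by linarith [h i])).mul_mul_conjTranspose_same U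

set_option maxHeartbeats 1000000 in
theorem statement12 {N r C : ℕ} (hr : 0 < r) (hrC : r < C) (hN : 1 ≤ N)
    (G : SimpleGraph (Fin (N + 1))) [DecidableRel G.Adj]
    (hdeg0 : G.degree 0 = C) (hdeg : ∀ i : Fin (N + 1), i ≠ 0 → G.degree i ≤ r)
    (hgap : ((C : ℝ) + 1) / (r : ℝ) > (N : ℝ) ^ ((1 : ℝ) / 3) + 1) :
    ∀ lam : ℝ, (G.lapMatrix ℝ).charpoly.IsRoot lam →
      (∀ μ : ℝ, (G.lapMatrix ℝ).charpoly.IsRoot μ → μ ≤ lam) →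
      -- the largest eigenvalue is simple ...
      rootMultiplicity lam (G.lapMatrix ℝ).charpoly = 1 ∧
      -- ... and every eigenvector `v` of it has `∑ i, νᵢ^ℓ ≠ 0` for every `ℓ ≥ 2`
      (∀ v : Fin (N + 1) → ℝ, v ≠ 0 → G.lapMatrix ℝ *ᵥ v = lam • v →
        ∀ ℓ : ℕ, 2 ≤ ℓ → ∑ i, v i ^ ℓ ≠ 0) := by
  intro lam hroot hmax
  classical
  have hpsd := G.posSemidef_lapMatrix (R := ℝ)
  have hH : (G.lapMatrix ℝ).IsHermitian := hpsd.1
  have hchar := herm_charpoly' hH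
  have hev_le : ∀ i, hH.eigenvalues i ≤ lam := by
    intro i
    apply hmax
    rw [hchar, IsRoot.def, eval_prod]
    exact Finset.prod_eq_zero (Finset.mem_univ i) (by simp)
  have hex : ∃ i, hH.eigenvalues i = lam := by
    have h := hroot
    rw [hchar, IsRoot.def, eval_prod] at h
    obtain ⟨i, -, hi⟩ := Finset.prod_eq_zero_iff.mp h
    refine ⟨i, ?_⟩
    simp only [eval_sub, eval_X, eval_C, sub_eq_zero] at hi
    exact hi.symm
  -- numeric preliminaries
  have hrR : (0:ℝ) < r := by exact_mod_cast hr
  have hNR : (1:ℝ) ≤ N := by exact_mod_cast hN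
  have hN3 : (1:ℝ) ≤ (N:ℝ) ^ ((1:ℝ)/3) := Real.one_le_rpow hNR (by norm_num)
  have hCgt : (r:ℝ) * ((N:ℝ)^((1:ℝ)/3) + 1) < (C:ℝ) + 1 := by
    rw [gt_iff_lt, lt_div_iff₀ hrR] at hgap
    linarith
  have hden : (0:ℝ) < (C:ℝ) + 1 - r := by nlinarith
  set c : ℝ := (r:ℝ) / ((C:ℝ) + 1 - r) with hcdef
  have hc0 : 0 ≤ c := by positivity
  have hcN : c * (N:ℝ)^((1:ℝ)/3) < 1 := by
    rw [hcdef, div_mul_eq_mul_div, div_lt_one hden]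
    nlinarith
  have hc1 : c < 1 := lt_of_le_of_lt (le_mul_of_one_le_right hc0 hN3) hcN
  -- Rayleigh bound
  have hray : ∀ x : Fin (N+1) → ℝ, x ⬝ᵥ (G.lapMatrix ℝ *ᵥ x) ≤ lam * (x ⬝ᵥ x) := by
    intro x
    have h1 := (shift_psd' hH hev_le).dotProduct_mulVec_nonneg x
    have h2 : (lam • (1 : Matrix (Fin (N+1)) (Fin (N+1)) ℝ) - G.lapMatrix ℝ) *ᵥ x
        = lam • x - G.lapMatrix ℝ *ᵥ x := by
      rw [Matrix.sub_mulVec, Matrix.smul_mulVec, Matrix.one_mulVec]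
    rw [star_trivial, h2, dotProduct_sub, dotProduct_smul, smul_eq_mul] at h1
    linarith
  -- test vector gives lam ≥ C + 1
  set x : Fin (N+1) → ℝ := fun i => if i = 0 then (C:ℝ) else if G.Adj 0 i then -1 else 0 with hxdef
  have hdegsum : ∑ j : Fin (N+1), (if G.Adj 0 j then (1:ℝ) else 0) = C := by
    rw [← SimpleGraph.degree_eq_sum_if_adj, hdeg0]
  have hCge1 : (1:ℝ) ≤ (C:ℝ) := by exact_mod_cast Nat.one_le_iff_ne_zero.mpr (by omega)
  have hxx : x ⬝ᵥ x = (C:ℝ)^2 + C := by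
    rw [dotProduct, ← Finset.add_sum_erase _ _ (Finset.mem_univ 0)]
    have h0 : x 0 * x 0 = (C:ℝ)^2 := by rw [hxdef]; simp [sq]
    have hrest : ∑ i ∈ Finset.univ.erase 0, x i * x i
        = ∑ i ∈ Finset.univ.erase 0, (if G.Adj 0 i then (1:ℝ) else 0) := by
      refine Finset.sum_congr rfl fun i hi => ?_
      have hi0 : i ≠ 0 := Finset.ne_of_mem_erase hi
      rw [hxdef]
      by_cases h : G.Adj 0 i <;> simp [hi0, h]
    rw [h0, hrest, Finset.sum_erase _ (by simp), hdegsum]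
  have hquad : ((C:ℝ)+1) * ((C:ℝ)^2 + C) ≤ x ⬝ᵥ (G.lapMatrix ℝ *ᵥ x) := by
    have hform : x ⬝ᵥ (G.lapMatrix ℝ *ᵥ x)
        = (∑ i, ∑ j, if G.Adj i j then (x i - x j)^2 else 0)/2 := by
      rw [← Matrix.toLinearMap₂'_apply', SimpleGraph.lapMatrix_toLinearMap₂']
    set F : Fin (N+1) → Fin (N+1) → ℝ := fun i j => if G.Adj i j then (x i - x j)^2 else 0 with hF
    have hF0 : ∀ i j, 0 ≤ F i j := by
      intro i j; rw [hF]; dsimp only; positivity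
    have hrow0 : ∑ j, F 0 j = (C:ℝ) * ((C:ℝ)+1)^2 := by
      have heach : ∀ j, F 0 j = ((C:ℝ)+1)^2 * (if G.Adj 0 j then (1:ℝ) else 0) := by
        intro j; rw [hF]; dsimp only
        by_cases h : G.Adj 0 j
        · have hj0 : j ≠ 0 := fun hj => by subst hj; exact G.irrefl h
          rw [if_pos h, if_pos h, hxdef]
          simp only [if_pos rfl, if_neg hj0, if_pos h]
          norm_num
        · rw [if_neg h, if_neg h, mul_zero]
      simp_rw [heach]
      rw [← Finset.mul_sum, hdegsum]
      ring
    have hcol : ∀ i : Fin (N+1), i ≠ 0 → F i 0 = ((C:ℝ)+1)^2 * (if G.Adj 0 i then (1:ℝ) else 0) := by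
      intro i hi; rw [hF]; dsimp only
      by_cases h : G.Adj i 0
      · have h' : G.Adj 0 i := h.symm
        rw [if_pos h, if_pos h', hxdef]
        simp only [if_neg hi, if_pos h', if_pos rfl]
        norm_num
        ring_nf
      · have h' : ¬ G.Adj 0 i := fun hh => h hh.symm
        rw [if_neg h, if_neg h', mul_zero]
    have hsum : 2 * ((C:ℝ) * ((C:ℝ)+1)^2) ≤ ∑ i, ∑ j, F i j := by
      rw [← Finset.add_sum_erase _ (fun i => ∑ j, F i j) (Finset.mem_univ 0)]
      have h2 : ∑ i ∈ Finset.univ.erase 0, F i 0 ≤ ∑ i ∈ Finset.univ.erase 0, ∑ j, F i j :=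
        Finset.sum_le_sum fun i _ => Finset.single_le_sum (fun j _ => hF0 i j) (Finset.mem_univ 0)
      have h3 : ∑ i ∈ Finset.univ.erase 0, F i 0 = (C:ℝ) * ((C:ℝ)+1)^2 := by
        rw [Finset.sum_congr rfl (fun i hi => hcol i (Finset.ne_of_mem_erase hi)),
          Finset.sum_erase _ (by simp), ← Finset.mul_sum, hdegsum]
        ring
      linarith [hrow0, h2, h3]
    rw [hform]
    have hring : ((C:ℝ)+1) * ((C:ℝ)^2 + C) = (C:ℝ) * ((C:ℝ)+1)^2 := by ring
    linarith [hsum]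
  have hCpos : (0:ℝ) < (C:ℝ)^2 + C := by nlinarith
  have hlam : (C:ℝ) + 1 ≤ lam := by
    have h1 := hray x
    rw [hxx] at h1
    exact le_of_mul_le_mul_right (by linarith [hquad]) hCpos
  -- dominance
  have hdom : ∀ v : Fin (N+1) → ℝ, G.lapMatrix ℝ *ᵥ v = lam • v →
      ∀ i : Fin (N+1), i ≠ 0 → |v i| ≤ c * |v 0| := by
    intro v hv
    set M : ℝ := Finset.univ.sup' Finset.univ_nonempty (fun i => |v i|) with hMdef
    have hMle : ∀ i, |v i| ≤ M := by
      intro i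
      rw [hMdef]
      exact Finset.le_sup' (fun i => |v i|) (Finset.mem_univ i)
    have hM0 : 0 ≤ M := le_trans (abs_nonneg (v 0)) (hMle 0)
    have hstep : ∀ i : Fin (N+1), i ≠ 0 → |v i| ≤ c * M := by
      intro i hi
      have hrow := congrFun hv i
      rw [SimpleGraph.lapMatrix_mulVec_apply] at hrow
      rw [Pi.smul_apply, smul_eq_mul] at hrow
      have hrow' : (lam - (G.degree i : ℝ)) * v i = - ∑ u ∈ G.neighborFinset i, v u := by
        linarith [hrow]
      have hdle : ((G.degree i : ℕ) : ℝ) ≤ (r:ℝ) := by exact_mod_cast hdeg i hi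
      have hsumb : |∑ u ∈ G.neighborFinset i, v u| ≤ (r:ℝ) * M := by
        calc |∑ u ∈ G.neighborFinset i, v u| ≤ ∑ u ∈ G.neighborFinset i, |v u| :=
              Finset.abs_sum_le_sum_abs _ _
          _ ≤ (G.neighborFinset i).card • M := Finset.sum_le_card_nsmul _ _ M fun u _ => hMle u
          _ = ((G.degree i : ℕ) : ℝ) * M := by rw [nsmul_eq_mul]; rfl
          _ ≤ (r:ℝ) * M := mul_le_mul_of_nonneg_right hdle hM0
      have hgap2 : (C:ℝ) + 1 - r ≤ lam - (G.degree i : ℝ) := by linarith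
      have h5 : ((C:ℝ)+1-r) * |v i| ≤ (r:ℝ) * M := by
        calc ((C:ℝ)+1-r) * |v i| ≤ (lam - (G.degree i : ℝ)) * |v i| :=
              mul_le_mul_of_nonneg_right hgap2 (abs_nonneg _)
          _ = |(lam - (G.degree i : ℝ)) * v i| := by
              rw [abs_mul, abs_of_nonneg (by linarith : (0:ℝ) ≤ lam - (G.degree i : ℝ))]
          _ = |∑ u ∈ G.neighborFinset i, v u| := by rw [hrow', abs_neg]
          _ ≤ (r:ℝ) * M := hsumb
      rw [hcdef, div_mul_eq_mul_div, le_div_iff₀ hden]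
      linarith [h5]
    obtain ⟨i0, -, hi0⟩ := Finset.exists_mem_eq_sup' (Finset.univ_nonempty) (fun i => |v i|)
    have hMv0 : M = |v 0| := by
      by_cases h : i0 = 0
      · rw [hMdef, hi0, h]
      · have hMi0 : M = |v i0| := by rw [hMdef]; exact hi0
        have h1 : M ≤ c * M := le_trans (le_of_eq hMi0) (hstep i0 h)
        have hM0' : M ≤ 0 := by nlinarith
        have hMz : M = 0 := le_antisymm hM0' hM0
        have h2 : |v 0| = 0 := le_antisymm (hMz ▸ hMle 0) (abs_nonneg _)
        rw [hMz, h2]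
    intro i hi
    rw [← hMv0]
    exact hstep i hi
  have hvzero : ∀ v : Fin (N+1) → ℝ, G.lapMatrix ℝ *ᵥ v = lam • v → v 0 = 0 → v = 0 := by
    intro v hv h0
    funext i
    by_cases h : i = 0
    · rw [h, h0]; rfl
    · have h1 := hdom v hv i h
      rw [h0, abs_zero, mul_zero] at h1
      exact abs_eq_zero.mp (le_antisymm h1 (abs_nonneg _))
  constructor
  · -- simplicity
    obtain ⟨i₀, hi₀⟩ := hex
    rw [hchar, rm_prod', Finset.card_eq_one]
    refine ⟨i₀, ?_⟩
    ext j
    simp only [Finset.mem_filter, Finset.mem_univ, true_and, Finset.mem_singleton]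
    constructor
    · intro hj
      by_contra hne
      set U := (Matrix.IsHermitian.eigenvectorUnitary hH : Matrix (Fin (N+1)) (Fin (N+1)) ℝ)
        with hUdef
      have hUU2 : star U * U = 1 := by
        rw [hUdef]
        exact Unitary.coe_star_mul_self _
      have hON : ∀ a b : Fin (N+1),
          ∑ k, (hH.eigenvectorBasis a) k * (hH.eigenvectorBasis b) k
            = if a = b then (1:ℝ) else 0 := by
        intro a b
        have h := congrFun (congrFun hUU2 a) b
        simpa [Matrix.mul_apply, Matrix.star_apply, Matrix.one_apply, hUdef] using h
      set u : Fin (N+1) → ℝ := ⇑(hH.eigenvectorBasis i₀) with hu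
      set w : Fin (N+1) → ℝ := ⇑(hH.eigenvectorBasis j) with hw
      have huev : G.lapMatrix ℝ *ᵥ u = lam • u := by
        rw [hu, hH.mulVec_eigenvectorBasis, hi₀]
      have hwev : G.lapMatrix ℝ *ᵥ w = lam • w := by
        rw [hw, hH.mulVec_eigenvectorBasis, hj]
      have huu : ∑ k, u k * u k = 1 := by
        have h := hON i₀ i₀
        rw [if_pos rfl] at h
        exact h
      have hww : ∑ k, w k * w k = 1 := by
        have h := hON j j
        rw [if_pos rfl] at h
        exact h
      have huw : ∑ k, u k * w k = 0 := by
        have h := hON i₀ j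
        rw [if_neg (Ne.symm hne)] at h
        exact h
      have hu0 : u 0 ≠ 0 := by
        intro h0
        have hz := hvzero u huev h0
        rw [hz] at huu
        simp at huu
      have hw0 : w 0 ≠ 0 := by
        intro h0
        have hz := hvzero w hwev h0
        rw [hz] at hww
        simp at hww
      set z : Fin (N+1) → ℝ := (w 0) • u - (u 0) • w with hz
      have hzev : G.lapMatrix ℝ *ᵥ z = lam • z := by
        rw [hz, Matrix.mulVec_sub, Matrix.mulVec_smul, Matrix.mulVec_smul, huev, hwev,
          smul_comm (w 0) lam, smul_comm (u 0) lam, ← smul_sub]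
      have hz0 : z 0 = 0 := by
        rw [hz]
        simp only [Pi.sub_apply, Pi.smul_apply, smul_eq_mul]
        ring
      have hzz := hvzero z hzev hz0
      have hk : ∀ k, w 0 * u k = u 0 * w k := by
        intro k
        have h' : w 0 * u k - u 0 * w k = 0 := by
          have h := congrFun hzz k
          rw [hz] at h
          simpa [Pi.sub_apply, Pi.smul_apply, smul_eq_mul] using h
        linarith
      have hcontr : w 0 = 0 := by
        calc w 0 = w 0 * ∑ k, u k * u k := by rw [huu, mul_one]
          _ = ∑ k, (w 0 * u k) * u k := by
              rw [Finset.mul_sum]; exact Finset.sum_congr rfl fun k _ => by ring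
          _ = ∑ k, (u 0 * w k) * u k := Finset.sum_congr rfl fun k _ => by rw [hk k]
          _ = u 0 * ∑ k, u k * w k := by
              rw [Finset.mul_sum]; exact Finset.sum_congr rfl fun k _ => by ring
          _ = 0 := by rw [huw, mul_zero]
      exact hw0 hcontr
    · intro hj; rw [hj]; exact hi₀
  · -- power sums
    intro v hvne hvev ℓ hℓ
    have hv0 : v 0 ≠ 0 := fun h0 => hvne (hvzero v hvev h0)
    by_cases h3 : 3 ≤ ℓ
    · have habs : ∀ i : Fin (N+1), i ≠ 0 → |v i| ≤ c * |v 0| := hdom v hvev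
      have hvpos : 0 < |v 0| := abs_pos.mpr hv0
      have hNc3 : (N:ℝ) * c^3 < 1 := by
        have h2 : (c * (N:ℝ)^((1:ℝ)/3))^3 < 1 := by
          have hb : 0 ≤ c * (N:ℝ)^((1:ℝ)/3) := by positivity
          exact pow_lt_one₀ hb hcN (by norm_num)
        have h3' : ((N:ℝ)^((1:ℝ)/3))^(3:ℕ) = (N:ℝ) := by
          rw [← Real.rpow_natCast ((N:ℝ)^((1:ℝ)/3)) 3, ← Real.rpow_mul (by positivity)]
          norm_num
        calc (N:ℝ) * c^3 = (c * (N:ℝ)^((1:ℝ)/3))^3 := by rw [mul_pow, h3']; ring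
          _ < 1 := h2
      have hcl : c^ℓ ≤ c^3 := pow_le_pow_of_le_one hc0 hc1.le h3
      have hsplit : ∑ i, v i ^ ℓ = v 0 ^ ℓ + ∑ i ∈ Finset.univ.erase 0, v i ^ ℓ :=
        (Finset.add_sum_erase _ _ (Finset.mem_univ 0)).symm
      have hrest : |∑ i ∈ Finset.univ.erase 0, v i ^ ℓ| < |v 0| ^ ℓ := by
        have hb1 : |∑ i ∈ Finset.univ.erase 0, v i ^ ℓ| ≤ ∑ i ∈ Finset.univ.erase 0, |v i| ^ ℓ := by
          refine le_trans (Finset.abs_sum_le_sum_abs _ _) ?_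
          exact le_of_eq (Finset.sum_congr rfl fun i _ => abs_pow _ _)
        have hb2 : ∑ i ∈ Finset.univ.erase 0, |v i| ^ ℓ ≤ (N:ℝ) * (c * |v 0|)^ℓ := by
          calc ∑ i ∈ Finset.univ.erase 0, |v i| ^ ℓ
              ≤ ∑ _i ∈ Finset.univ.erase 0, (c * |v 0|)^ℓ :=
                Finset.sum_le_sum fun i hi =>
                  pow_le_pow_left₀ (abs_nonneg _) (habs i (Finset.ne_of_mem_erase hi)) ℓ
            _ = (N:ℝ) * (c * |v 0|)^ℓ := by
                rw [Finset.sum_const, Finset.card_erase_of_mem (Finset.mem_univ 0),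
                  Finset.card_univ, Fintype.card_fin, nsmul_eq_mul]
                norm_num
        have hb3 : (N:ℝ) * (c * |v 0|)^ℓ < |v 0|^ℓ := by
          have hNcl : (N:ℝ) * c^ℓ < 1 := by
            have : (N:ℝ) * c^ℓ ≤ (N:ℝ) * c^3 :=
              mul_le_mul_of_nonneg_left hcl (by positivity)
            linarith
          calc (N:ℝ) * (c * |v 0|)^ℓ = ((N:ℝ) * c^ℓ) * |v 0|^ℓ := by rw [mul_pow]; ring
            _ < 1 * |v 0|^ℓ := mul_lt_mul_of_pos_right hNcl (pow_pos hvpos ℓ)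
            _ = |v 0|^ℓ := one_mul _
        linarith
      intro hzero
      rw [hsplit] at hzero
      have heq : ∑ i ∈ Finset.univ.erase 0, v i ^ ℓ = -(v 0 ^ ℓ) := by linarith
      rw [heq, abs_neg, abs_pow] at hrest
      exact lt_irrefl _ hrest
    · have hl2 : ℓ = 2 := by omega
      subst hl2
      have hpos : 0 < ∑ i, v i ^ 2 :=
        Finset.sum_pos' (fun i _ => sq_nonneg _)
          ⟨0, Finset.mem_univ 0, pow_two_pos_of_ne_zero hv0⟩
      exact ne_of_gt hpos
end

section
/- Let r < C be positive integers and let G be a finite simple undirected graph consisting of one vertex n₀ of degree C and N ≥ 1 further vertices each of degree at most r, and assume (C+1)/r > N^{1/3} + 1. Then every eigenvector of the largest eigenvalue of the Laplacian L_G has nonzero coordinate at the vertex n₀. -/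
open Matrix Polynomial

lemma aux_isRoot_of_mem_spectrum {n : Type*} [Fintype n] [DecidableEq n]
    (A : Matrix n n ℝ) (μ : ℝ) (h : μ ∈ spectrum ℝ A) : A.charpoly.IsRoot μ := by
  rw [spectrum.mem_iff] at h
  have hch : (charmatrix A).map (Polynomial.evalRingHom μ) =
      (algebraMap ℝ (Matrix n n ℝ)) μ - A := by
    ext i j
    by_cases hij : i = j
    · subst hij
      simp [charmatrix_apply_eq, Matrix.algebraMap_matrix_apply]
    · simp [charmatrix_apply_ne _ _ _ hij, Matrix.algebraMap_matrix_apply, hij]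
  have hdet : A.charpoly.eval μ = ((algebraMap ℝ (Matrix n n ℝ)) μ - A).det := by
    rw [← hch, Matrix.charpoly, ← Polynomial.coe_evalRingHom, RingHom.map_det]
    rfl
  rw [IsRoot, hdet]
  by_contra hne
  exact h ((Matrix.isUnit_iff_isUnit_det _).mpr (isUnit_iff_ne_zero.mpr hne))

lemma aux_rayleigh {n : Type*} [Fintype n] [DecidableEq n] [Nonempty n]
    {A : Matrix n n ℝ} (hA : A.IsHermitian) (x : n → ℝ) :
    ∃ i, x ⬝ᵥ (A *ᵥ x) ≤ hA.eigenvalues i * (x ⬝ᵥ x) := by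
  obtain ⟨i, -, hi⟩ := Finset.exists_max_image Finset.univ hA.eigenvalues
    (Finset.univ_nonempty)
  refine ⟨i, ?_⟩
  set U : Matrix n n ℝ := (Matrix.IsHermitian.eigenvectorUnitary hA : Matrix n n ℝ) with hU
  have hUstar : star U = Uᵀ := by
    simp [Matrix.star_eq_conjTranspose, Matrix.conjTranspose_eq_transpose_of_trivial]
  have hUUt : U * Uᵀ = 1 := by
    rw [← hUstar]; exact Unitary.coe_mul_star_self (Matrix.IsHermitian.eigenvectorUnitary hA)
  set y : n → ℝ := Uᵀ *ᵥ x with hy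
  have hspec : A = U * Matrix.diagonal hA.eigenvalues * Uᵀ := by
    have h := Matrix.IsHermitian.spectral_theorem hA
    rw [Unitary.conjStarAlgAut_apply, ← hU, hUstar] at h
    exact h
  have key1 : x ⬝ᵥ (A *ᵥ x) = ∑ j, hA.eigenvalues j * (y j)^2 := by
    conv_lhs => rw [hspec]
    rw [← Matrix.mulVec_mulVec, ← Matrix.mulVec_mulVec, Matrix.dotProduct_mulVec x U,
      ← Matrix.mulVec_transpose]
    simp only [← hy, dotProduct, Matrix.mulVec_diagonal]
    exact Finset.sum_congr rfl fun j _ => by ring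
  have key2 : x ⬝ᵥ x = ∑ j, (y j)^2 := by
    have h2 : y ⬝ᵥ y = x ⬝ᵥ x := by
      rw [hy, Matrix.dotProduct_mulVec _ Uᵀ, ← Matrix.mulVec_transpose, Matrix.transpose_transpose,
        Matrix.mulVec_mulVec, hUUt, Matrix.one_mulVec]
    rw [← h2]
    simp [dotProduct, sq]
  rw [key1, key2, Finset.mul_sum]
  exact Finset.sum_le_sum fun j _ =>
    mul_le_mul_of_nonneg_right (hi j (Finset.mem_univ j)) (sq_nonneg _)

theorem statement13 {N r C : ℕ} (hr : 0 < r) (hrC : r < C) (hN : 1 ≤ N)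
    (G : SimpleGraph (Fin (N + 1))) [DecidableRel G.Adj]
    (hdeg0 : G.degree 0 = C) (hdeg : ∀ i : Fin (N + 1), i ≠ 0 → G.degree i ≤ r)
    (hgap : ((C : ℝ) + 1) / (r : ℝ) > (N : ℝ) ^ ((1 : ℝ) / 3) + 1) :
    ∀ lam : ℝ, (G.lapMatrix ℝ).charpoly.IsRoot lam →
      (∀ μ : ℝ, (G.lapMatrix ℝ).charpoly.IsRoot μ → μ ≤ lam) →
      -- every eigenvector of the largest eigenvalue has nonzero coordinate at `n₀`
      ∀ v : Fin (N + 1) → ℝ, v ≠ 0 → G.lapMatrix ℝ *ᵥ v = lam • v → v 0 ≠ 0 := by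
  intro lam hroot hmax v hv hev
  by_contra hv0
  classical
  have hA : (G.lapMatrix ℝ).IsHermitian := (SimpleGraph.posSemidef_lapMatrix ℝ G).1
  have hCpos : (0:ℝ) < C := by
    have : 0 < C := lt_trans hr hrC
    exact_mod_cast this
  have hrpos : (0:ℝ) < r := by exact_mod_cast hr
  -- a helper for sums over neighbors of 0
  have hfilter : Finset.univ.filter (fun j => G.Adj 0 j) = G.neighborFinset 0 := by
    ext j; simp [SimpleGraph.mem_neighborFinset]
  have hsum : ∀ c : ℝ, (∑ j : Fin (N+1), if G.Adj 0 j then c else 0) = (C:ℝ) * c := by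
    intro c
    rw [← Finset.sum_filter, hfilter, Finset.sum_const]
    rw [SimpleGraph.card_neighborFinset_eq_degree, hdeg0]
    simp [mul_comm]
  -- the Rayleigh test vector
  set x : Fin (N+1) → ℝ := fun i => if i = 0 then (C:ℝ) else if G.Adj 0 i then -1 else 0 with hx
  set t : Fin (N+1) → Fin (N+1) → ℝ :=
    fun i j => if G.Adj i j then (x i - x j)^2 else 0 with ht
  have htnonneg : ∀ i j, 0 ≤ t i j := by
    intro i j; rw [ht]; dsimp; split <;> positivity
  have hrow : (∑ j, t 0 j) = (C:ℝ) * ((C:ℝ)+1)^2 := by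
    have : ∀ j, t 0 j = if G.Adj 0 j then ((C:ℝ)+1)^2 else 0 := by
      intro j
      by_cases h : G.Adj 0 j
      · have hj0 : j ≠ 0 := fun e => by subst e; exact G.irrefl h
        simp only [ht, hx, h, if_true, if_pos rfl, if_neg hj0]
        ring
      · simp [ht, h]
    rw [Finset.sum_congr rfl fun j _ => this j, hsum]
  have hcol : (∑ i, t i 0) = (C:ℝ) * ((C:ℝ)+1)^2 := by
    have : ∀ i, t i 0 = if G.Adj 0 i then ((C:ℝ)+1)^2 else 0 := by
      intro i
      by_cases h : G.Adj 0 i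
      · have hi0 : i ≠ 0 := fun e => by subst e; exact G.irrefl h
        have h' : G.Adj i 0 := h.symm
        simp only [ht, hx, h, h', if_true, if_pos rfl, if_neg hi0]
        ring
      · have h' : ¬ G.Adj i 0 := fun hc => h hc.symm
        simp [ht, h, h']
    rw [Finset.sum_congr rfl fun i _ => this i, hsum]
  have hS : 2 * ((C:ℝ) * ((C:ℝ)+1)^2) ≤ ∑ i, ∑ j, t i j := by
    have h0mem : (0 : Fin (N+1)) ∈ (Finset.univ : Finset (Fin (N+1))) := Finset.mem_univ _
    rw [← Finset.add_sum_erase _ _ h0mem]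
    have hrest : (∑ i ∈ Finset.univ.erase 0, t i 0) ≤ ∑ i ∈ Finset.univ.erase 0, ∑ j, t i j :=
      Finset.sum_le_sum fun i _ =>
        Finset.single_le_sum (fun j _ => htnonneg i j) (Finset.mem_univ 0)
    have hercol : (∑ i ∈ Finset.univ.erase 0, t i 0) = ∑ i, t i 0 :=
      Finset.sum_erase _ (by simp [ht, G.irrefl])
    rw [hrow]
    rw [hercol, hcol] at hrest
    linarith
  have hQ : (C:ℝ) * ((C:ℝ)+1)^2 ≤ x ⬝ᵥ (G.lapMatrix ℝ *ᵥ x) := by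
    have := SimpleGraph.lapMatrix_toLinearMap₂' G (R := ℝ) x
    rw [Matrix.toLinearMap₂'_apply'] at this
    rw [this]
    rw [ht] at hS
    linarith
  have hxx : x ⬝ᵥ x = (C:ℝ) * ((C:ℝ)+1) := by
    have hterm : ∀ i, x i * x i = if i = 0 then (C:ℝ)^2 else if G.Adj 0 i then 1 else 0 := by
      intro i
      by_cases h : i = 0
      · subst h; simp [hx]; ring
      · by_cases h2 : G.Adj 0 i <;> simp [hx, h, h2]
    have : x ⬝ᵥ x = ∑ i, if i = 0 then (C:ℝ)^2 else if G.Adj 0 i then 1 else 0 := by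
      rw [dotProduct]
      exact Finset.sum_congr rfl fun i _ => hterm i
    rw [this, ← Finset.add_sum_erase _ _ (Finset.mem_univ (0 : Fin (N+1)))]
    have her : (∑ i ∈ Finset.univ.erase 0,
        if i = 0 then (C:ℝ)^2 else if G.Adj 0 i then 1 else 0)
        = ∑ i : Fin (N+1), if G.Adj 0 i then (1:ℝ) else 0 := by
      rw [Finset.sum_congr rfl (fun i hi => if_neg (Finset.ne_of_mem_erase hi))]
      exact Finset.sum_erase _ (by simp [G.irrefl])
    rw [her, hsum]
    simp
    ring
  -- lower bound on lam
  have hlam1 : (C:ℝ) + 1 ≤ lam := by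
    obtain ⟨i, hiR⟩ := aux_rayleigh hA x
    have hμroot : (G.lapMatrix ℝ).charpoly.IsRoot (hA.eigenvalues i) :=
      aux_isRoot_of_mem_spectrum _ _ (hA.eigenvalues_mem_spectrum_real i)
    have hμlam : hA.eigenvalues i ≤ lam := hmax _ hμroot
    rw [hxx] at hiR
    have hCC1 : (0:ℝ) < (C:ℝ) * ((C:ℝ)+1) := by nlinarith [hCpos]
    have h3 : hA.eigenvalues i * ((C:ℝ)*((C:ℝ)+1)) ≤ lam * ((C:ℝ)*((C:ℝ)+1)) :=
      mul_le_mul_of_nonneg_right hμlam (le_of_lt hCC1)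
    have h4 : (C:ℝ)*((C:ℝ)+1)^2 ≤ lam * ((C:ℝ)*((C:ℝ)+1)) := by linarith [hQ, hiR, h3]
    nlinarith [h4, hCC1]
  -- upper bound on lam
  obtain ⟨i0, -, hmax'⟩ := Finset.exists_max_image Finset.univ (fun i => |v i|)
    Finset.univ_nonempty
  have hvi0 : v i0 ≠ 0 := by
    intro h
    apply hv
    funext j
    have hj := hmax' j (Finset.mem_univ j)
    simp only [h, abs_zero] at hj
    exact abs_nonpos_iff.mp hj
  have hi00 : i0 ≠ 0 := fun e => hvi0 (by rw [e, hv0])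
  have heq : (G.degree i0 : ℝ) * v i0 - ∑ u ∈ G.neighborFinset i0, v u = lam * v i0 := by
    have h := congrFun hev i0
    rw [SimpleGraph.lapMatrix_mulVec_apply] at h
    simpa using h
  have hdegbound : (G.degree i0 : ℝ) ≤ r := by exact_mod_cast hdeg i0 hi00
  have habs : lam * |v i0| ≤ 2 * r * |v i0| := by
    have h1 : |lam * v i0| ≤ (G.degree i0 : ℝ) * |v i0| + ∑ u ∈ G.neighborFinset i0, |v u| := by
      rw [← heq]
      refine (abs_sub _ _).trans ?_
      gcongr
      · rw [abs_mul, abs_of_nonneg (Nat.cast_nonneg _)]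
      · exact Finset.abs_sum_le_sum_abs _ _
    have h2 : (∑ u ∈ G.neighborFinset i0, |v u|) ≤ (G.degree i0 : ℝ) * |v i0| := by
      calc (∑ u ∈ G.neighborFinset i0, |v u|)
          ≤ ∑ u ∈ G.neighborFinset i0, |v i0| :=
            Finset.sum_le_sum fun u _ => hmax' u (Finset.mem_univ u)
        _ = (G.degree i0 : ℝ) * |v i0| := by
            rw [Finset.sum_const, SimpleGraph.card_neighborFinset_eq_degree]
            simp [mul_comm]
    have hlamnn : 0 ≤ lam := by linarith [hlam1, hCpos]
    have : lam * |v i0| = |lam * v i0| := by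
      rw [abs_mul, abs_of_nonneg hlamnn]
    rw [this]
    calc |lam * v i0| ≤ (G.degree i0 : ℝ) * |v i0| + ∑ u ∈ G.neighborFinset i0, |v u| := h1
      _ ≤ (G.degree i0 : ℝ) * |v i0| + (G.degree i0 : ℝ) * |v i0| := by linarith [h2]
      _ ≤ 2 * r * |v i0| := by nlinarith [abs_nonneg (v i0), hdegbound]
  have hvpos : 0 < |v i0| := abs_pos.mpr hvi0
  have hlam2 : lam ≤ 2 * r := by
    by_contra hcon
    push_neg at hcon
    nlinarith [habs, hvpos]
  -- contradiction
  have hN13 : (1:ℝ) ≤ (N:ℝ) ^ ((1:ℝ)/3) :=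
    Real.one_le_rpow (by exact_mod_cast hN) (by norm_num)
  have h2r : 2 * (r:ℝ) < (C:ℝ) + 1 := by
    have h2 : (2:ℝ) < ((C:ℝ)+1) / r := by linarith [hgap, hN13]
    rw [lt_div_iff₀ hrpos] at h2
    linarith
  linarith [hlam1, hlam2, h2r]
end

section
/- Let G be a finite simple undirected graph on M ≥ 2 vertices containing a vertex n₀ such that every vertex other than n₀ has degree at most r in G. Then the second-largest eigenvalue of the Laplacian L_G (i.e. the (M−1)-st eigenvalue when the M real eigenvalues are listed in increasing order with multiplicity) is at most 2r + 1. -/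
open Matrix Polynomial

lemma aux_charpoly_conj {n : Type*} [Fintype n] [DecidableEq n] {R : Type*} [CommRing R]
    (U V A : Matrix n n R) (hUV : U * V = 1) :
    (U * A * V).charpoly = A.charpoly := by
  have hmapUV : (U.map (C : R →+* R[X])) * (V.map C) = 1 := by
    rw [← Matrix.map_mul, hUV, Matrix.map_one _ (map_zero C) (map_one C)]
  have key : charmatrix (U * A * V) = U.map C * charmatrix A * V.map C := by
    unfold charmatrix
    rw [RingHom.mapMatrix_apply, RingHom.mapMatrix_apply, mul_sub, sub_mul]
    congr 1
    · rw [← (Matrix.scalar_commute (X : R[X]) (fun r => Commute.all _ _) (U.map C)).eq, mul_assoc,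
        hmapUV, mul_one]
    · rw [Matrix.map_mul, Matrix.map_mul]
  unfold Matrix.charpoly
  rw [key, det_mul, det_mul]
  have h1 : (U.map (C : R →+* R[X])).det * (V.map C).det = 1 := by
    rw [← det_mul, hmapUV, det_one]
  linear_combination (charmatrix A).det * h1

lemma aux_charpoly_diagonal {n : Type*} [Fintype n] [DecidableEq n] {R : Type*} [CommRing R]
    (d : n → R) : (Matrix.diagonal d).charpoly = ∏ i, (X - C (d i)) := by
  have key : charmatrix (Matrix.diagonal d) = Matrix.diagonal (fun i => X - C (d i)) := by
    unfold charmatrix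
    rw [RingHom.mapMatrix_apply, Matrix.diagonal_map (map_zero C)]
    ext i j
    by_cases h : i = j <;> simp [h, Matrix.scalar_apply, Matrix.diagonal_apply_ne]
  rw [Matrix.charpoly, key, det_diagonal]

set_option maxHeartbeats 1000000 in
theorem statement15 {M r : ℕ} (hM : 2 ≤ M)
    (G : SimpleGraph (Fin M)) [DecidableRel G.Adj]
    (n₀ : Fin M) (hdeg : ∀ i, i ≠ n₀ → G.degree i ≤ r)
    -- `e` lists the (real) eigenvalues of the Laplacian in increasing order with multiplicity
    (e : Fin M → ℝ) (hmono : Monotone e)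
    (hchar : (G.lapMatrix ℝ).charpoly = ∏ i, (X - Polynomial.C (e i))) :
    e ⟨M - 2, by omega⟩ ≤ 2 * (r : ℝ) + 1 := by
  by_contra hcon
  push_neg at hcon
  set c : ℝ := e ⟨M - 2, by omega⟩ with hcdef
  have hL : (G.lapMatrix ℝ).IsHermitian := (SimpleGraph.posSemidef_lapMatrix ℝ G).1
  -- charpoly in terms of eigenvalues
  have hchar2 : (G.lapMatrix ℝ).charpoly = ∏ i, (X - C (hL.eigenvalues i)) := by
    have hU : ((hL.eigenvectorUnitary : Matrix (Fin M) (Fin M) ℝ)) *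
        (star (hL.eigenvectorUnitary : Matrix (Fin M) (Fin M) ℝ)) = 1 :=
      Matrix.mem_unitaryGroup_iff.mp hL.eigenvectorUnitary.2
    calc (G.lapMatrix ℝ).charpoly
        = ((hL.eigenvectorUnitary : Matrix (Fin M) (Fin M) ℝ) *
            Matrix.diagonal (RCLike.ofReal ∘ hL.eigenvalues) *
            (star (hL.eigenvectorUnitary : Matrix (Fin M) (Fin M) ℝ))).charpoly := by
          conv_lhs => rw [hL.spectral_theorem, Unitary.conjStarAlgAut_apply]
      _ = (Matrix.diagonal (RCLike.ofReal ∘ hL.eigenvalues)).charpoly :=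
          aux_charpoly_conj _ _ _ hU
      _ = ∏ i, (X - C (hL.eigenvalues i)) := by
          rw [aux_charpoly_diagonal]
          simp [Function.comp]
  -- roots: multiset of e equals multiset of eigenvalues
  have hprodroots : ∀ f : Fin M → ℝ, (∏ i, (X - C (f i))).roots = Finset.univ.val.map f := by
    intro f
    have h1 : ∏ i, (X - C (f i)) =
        (Multiset.map (fun a => X - C a) (Finset.univ.val.map f)).prod := by
      rw [Multiset.map_map]
      rfl
    rw [h1, Polynomial.roots_multiset_prod_X_sub_C]
  have hms : Finset.univ.val.map e = Finset.univ.val.map hL.eigenvalues := by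
    have := congrArg Polynomial.roots (hchar.symm.trans hchar2)
    rwa [hprodroots, hprodroots] at this
  -- counting: at least two eigenvalues are ≥ c
  have hcard : 1 < (Finset.univ.filter (fun i => c ≤ hL.eigenvalues i)).card := by
    have h1 : (Finset.univ.filter (fun i => c ≤ e i)).card =
        (Finset.univ.filter (fun i => c ≤ hL.eigenvalues i)).card := by
      have := congrArg (Multiset.countP (fun x => c ≤ x)) hms
      rwa [Multiset.countP_map, Multiset.countP_map] at this
    rw [← h1]
    apply Finset.one_lt_card_iff.mpr
    refine ⟨⟨M - 2, by omega⟩, ⟨M - 1, by omega⟩, ?_, ?_, ?_⟩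
    · simp [← hcdef]
    · simp only [Finset.mem_filter, Finset.mem_univ, true_and]
      exact hmono (by simp [Fin.mk_le_mk]; omega)
    · simp [Fin.mk.injEq]; omega
  obtain ⟨i, j, hi, hj, hij⟩ := Finset.one_lt_card_iff.mp hcard
  rw [Finset.mem_filter] at hi hj
  have hci : c ≤ hL.eigenvalues i := hi.2
  have hcj : c ≤ hL.eigenvalues j := hj.2
  -- eigenvectors
  set u : Fin M → ℝ := ⇑(hL.eigenvectorBasis i) with hudef
  set v : Fin M → ℝ := ⇑(hL.eigenvectorBasis j) with hvdef
  have hortho : ∀ k l : Fin M,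
      (⇑(hL.eigenvectorBasis k) : Fin M → ℝ) ⬝ᵥ ⇑(hL.eigenvectorBasis l)
        = if k = l then 1 else 0 := by
    intro k l
    have h := hL.eigenvectorBasis.orthonormal
    rw [orthonormal_iff_ite] at h
    have h2 := h k l
    simpa [dotProduct, PiLp.inner_apply, RCLike.inner_apply, starRingEnd_apply, mul_comm] using h2
  obtain ⟨a, b, hy0, hab⟩ : ∃ a b : ℝ, a * u n₀ + b * v n₀ = 0 ∧ 0 < a ^ 2 + b ^ 2 := by
    by_cases h : u n₀ = 0
    · exact ⟨1, 0, by simp [h], by norm_num⟩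
    · refine ⟨v n₀, -u n₀, by ring, ?_⟩
      have h2 : 0 < u n₀ ^ 2 := lt_of_le_of_ne (sq_nonneg _) (Ne.symm (pow_ne_zero 2 h))
      nlinarith [sq_nonneg (v n₀)]
  set y : Fin M → ℝ := fun k => a * u k + b * v k with hydef
  have hyn₀ : y n₀ = 0 := hy0
  have hLu : G.lapMatrix ℝ *ᵥ u = hL.eigenvalues i • u := hL.mulVec_eigenvectorBasis i
  have hLv : G.lapMatrix ℝ *ᵥ v = hL.eigenvalues j • v := hL.mulVec_eigenvectorBasis j
  have hyadd : y = a • u + b • v := by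
    funext k
    simp [hydef]
  have huu : u ⬝ᵥ u = 1 := by rw [hudef]; simpa using hortho i i
  have hvv : v ⬝ᵥ v = 1 := by rw [hvdef]; simpa using hortho j j
  have huv : u ⬝ᵥ v = 0 := by rw [hudef, hvdef]; simpa [hij] using hortho i j
  have hvu : v ⬝ᵥ u = 0 := by rw [hudef, hvdef]; simpa [Ne.symm hij] using hortho j i
  have hQ : y ⬝ᵥ (G.lapMatrix ℝ *ᵥ y)
      = a ^ 2 * hL.eigenvalues i + b ^ 2 * hL.eigenvalues j := by
    rw [hyadd]
    simp [mulVec_add, mulVec_smul, hLu, hLv, dotProduct_add, add_dotProduct,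
      dotProduct_smul, smul_dotProduct, huu, hvv, huv, hvu, smul_eq_mul]
    ring
  have hnorm : ∑ k, (y k) ^ 2 = a ^ 2 + b ^ 2 := by
    have : y ⬝ᵥ y = a ^ 2 + b ^ 2 := by
      rw [hyadd]
      simp [dotProduct_add, add_dotProduct, dotProduct_smul, smul_dotProduct,
        huu, hvv, huv, hvu, smul_eq_mul]
      ring
    simpa [dotProduct, pow_two] using this
  -- quadratic form bound
  have hQ2 : y ⬝ᵥ (G.lapMatrix ℝ *ᵥ y)
      = (∑ k, ∑ l, if G.Adj k l then (y k - y l) ^ 2 else 0) / 2 := by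
    rw [← SimpleGraph.lapMatrix_toLinearMap₂' G (R := ℝ) y, Matrix.toLinearMap₂'_apply']
  have hdegbound : ∀ k : Fin M, (G.degree k : ℝ) * (y k) ^ 2 ≤ r * (y k) ^ 2 := by
    intro k
    by_cases hk : k = n₀
    · simp [hk, hyn₀]
    · have := hdeg k hk
      have h2 : (G.degree k : ℝ) ≤ r := by exact_mod_cast this
      nlinarith [sq_nonneg (y k)]
  have hsum1 : ∀ k : Fin M, ∑ l, (if G.Adj k l then (y k) ^ 2 else 0)
      = (G.degree k : ℝ) * (y k) ^ 2 := by
    intro k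
    rw [SimpleGraph.degree_eq_sum_if_adj G k, Finset.sum_mul]
    congr 1 with l
    by_cases h : G.Adj k l <;> simp [h]
  have hsum2 : ∀ k : Fin M, ∑ l, (if G.Adj l k then (y k) ^ 2 else 0)
      = (G.degree k : ℝ) * (y k) ^ 2 := by
    intro k
    rw [← hsum1 k]
    exact Finset.sum_congr rfl fun l _ => if_congr (G.adj_comm l k) rfl rfl
  have hupper : (∑ k, ∑ l, if G.Adj k l then (y k - y l) ^ 2 else 0)
      ≤ 4 * r * (a ^ 2 + b ^ 2) := by
    have step1 : (∑ k, ∑ l, if G.Adj k l then (y k - y l) ^ 2 else 0)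
        ≤ ∑ k, ∑ l, ((if G.Adj k l then 2 * (y k) ^ 2 else 0)
            + (if G.Adj k l then 2 * (y l) ^ 2 else 0)) := by
      apply Finset.sum_le_sum
      intro k _
      apply Finset.sum_le_sum
      intro l _
      by_cases h : G.Adj k l
      · simp only [h, if_true]
        nlinarith [sq_nonneg (y k + y l)]
      · simp [h]
    have step2 : ∑ k, ∑ l, ((if G.Adj k l then 2 * (y k) ^ 2 else 0)
          + (if G.Adj k l then 2 * (y l) ^ 2 else 0))
        = 4 * ∑ k, (G.degree k : ℝ) * (y k) ^ 2 := by
      have e1 : (∑ k, ∑ l, (if G.Adj k l then 2 * (y k) ^ 2 else 0))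
          = ∑ k, 2 * ((G.degree k : ℝ) * (y k) ^ 2) := by
        refine Finset.sum_congr rfl fun k _ => ?_
        rw [← hsum1 k, Finset.mul_sum]
        refine Finset.sum_congr rfl fun l _ => ?_
        by_cases h : G.Adj k l <;> simp [h]
      have e2 : (∑ k, ∑ l, (if G.Adj k l then 2 * (y l) ^ 2 else 0))
          = ∑ l, 2 * ((G.degree l : ℝ) * (y l) ^ 2) := by
        rw [Finset.sum_comm]
        refine Finset.sum_congr rfl fun l _ => ?_
        rw [← hsum2 l, Finset.mul_sum]
        refine Finset.sum_congr rfl fun k _ => ?_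
        by_cases h : G.Adj k l <;> simp [h]
      simp only [Finset.sum_add_distrib]
      rw [e1, e2, ← Finset.sum_add_distrib, Finset.mul_sum]
      exact Finset.sum_congr rfl fun k _ => by ring
    have step3 : ∑ k, (G.degree k : ℝ) * (y k) ^ 2 ≤ r * (a ^ 2 + b ^ 2) := by
      rw [← hnorm, Finset.mul_sum]
      exact Finset.sum_le_sum fun k _ => hdegbound k
    calc (∑ k, ∑ l, if G.Adj k l then (y k - y l) ^ 2 else 0)
        ≤ 4 * ∑ k, (G.degree k : ℝ) * (y k) ^ 2 := by rw [← step2]; exact step1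
      _ ≤ 4 * (r * (a ^ 2 + b ^ 2)) := by linarith [step3]
      _ = 4 * r * (a ^ 2 + b ^ 2) := by ring
  have hlow : c * (a ^ 2 + b ^ 2) ≤ y ⬝ᵥ (G.lapMatrix ℝ *ᵥ y) := by
    rw [hQ]
    nlinarith [sq_nonneg a, sq_nonneg b]
  have hhigh : y ⬝ᵥ (G.lapMatrix ℝ *ᵥ y) ≤ 2 * r * (a ^ 2 + b ^ 2) := by
    rw [hQ2]
    linarith
  nlinarith
end

section
/- Let n > 1 and let X = {x₁, …, x_{n−1}} be a set of n−1 mutually orthogonal nonzero vectors in ℝⁿ. Let 𝓗_X^n denote the set of all real n×n Hurwitz matrices A such that ⟨xᵢ, A xᵢ⟩ > 0 for all i = 1, …, n−1. Then 𝓗_X^n is a nonempty open subset of the space of all real n×n matrices. -/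
open Matrix Polynomial

/-- A real square matrix is Hurwitz if every complex eigenvalue of it has strictly
negative real part. -/
def IsHurwitz {n : ℕ} (A : Matrix (Fin n) (Fin n) ℝ) : Prop :=
  ∀ μ : ℂ, (A.map (fun r => (r : ℂ))).charpoly.IsRoot μ → μ.re < 0

namespace HurwitzAux

variable {n : ℕ}

lemma eval_charpoly (M : Matrix (Fin n) (Fin n) ℂ) (μ : ℂ) :
    M.charpoly.eval μ = (Matrix.scalar (Fin n) μ - M).det := by
  rw [Matrix.charpoly, _root_.eval_det, matPolyEquiv_charmatrix]
  simp

lemma scalar_mulVec (μ : ℂ) (v : Fin n → ℂ) :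
    Matrix.scalar (Fin n) μ *ᵥ v = μ • v := by
  ext i
  simp [Matrix.scalar_apply, Matrix.mulVec_diagonal]

lemma exists_eigenvector_of_det {M : Matrix (Fin n) (Fin n) ℂ} {μ : ℂ}
    (hdet : (Matrix.scalar (Fin n) μ - M).det = 0) :
    ∃ v, v ≠ 0 ∧ M *ᵥ v = μ • v := by
  obtain ⟨v, hv0, hv⟩ := Matrix.exists_mulVec_eq_zero_iff.2 hdet
  refine ⟨v, hv0, ?_⟩
  rw [Matrix.sub_mulVec, sub_eq_zero, scalar_mulVec] at hv
  exact hv.symm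

lemma exists_eigenvector_of_isRoot {M : Matrix (Fin n) (Fin n) ℂ} {μ : ℂ}
    (h : M.charpoly.IsRoot μ) :
    ∃ v, v ≠ 0 ∧ M *ᵥ v = μ • v := by
  apply exists_eigenvector_of_det
  rw [← eval_charpoly]
  exact h

lemma eig_bound {M : Matrix (Fin n) (Fin n) ℂ} {μ : ℂ}
    (h : ∃ v, v ≠ 0 ∧ M *ᵥ v = μ • v) :
    ‖μ‖ ≤ ∑ i, ∑ j, ‖M i j‖ := by
  obtain ⟨v, hv, heq⟩ := h
  have hev : Module.End.HasEigenvalue (Matrix.toLin' M) μ :=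
    Module.End.hasEigenvalue_of_hasEigenvector
      ⟨Module.End.mem_eigenspace_iff.2 (by simpa [Matrix.toLin'_apply] using heq), hv⟩
  obtain ⟨k, hk⟩ := eigenvalue_mem_ball hev
  have h1 : ‖μ‖ ≤ ‖M k k‖ + ∑ j ∈ Finset.univ.erase k, ‖M k j‖ := by
    have hd : ‖μ - M k k‖ ≤ ∑ j ∈ Finset.univ.erase k, ‖M k j‖ := by
      simpa [Metric.mem_closedBall, dist_eq_norm] using hk
    calc ‖μ‖ = ‖(μ - M k k) + M k k‖ := by ring_nf
      _ ≤ ‖μ - M k k‖ + ‖M k k‖ := norm_add_le _ _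
      _ ≤ _ := by linarith
  have h2 : ‖M k k‖ + ∑ j ∈ Finset.univ.erase k, ‖M k j‖ = ∑ j, ‖M k j‖ :=
    Finset.add_sum_erase _ (fun j => ‖M k j‖) (Finset.mem_univ k)
  refine (h1.trans_eq h2).trans ?_
  exact Finset.single_le_sum (f := fun i => ∑ j, ‖M i j‖)
    (fun i _ => Finset.sum_nonneg fun j _ => norm_nonneg _) (Finset.mem_univ k)

lemma isOpen_S :
    IsOpen {B : Matrix (Fin n) (Fin n) ℂ |
      ∀ μ : ℂ, 0 ≤ μ.re → (Matrix.scalar (Fin n) μ - B).det ≠ 0} := by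
  rw [isOpen_iff_forall_mem_open]
  intro B₀ hB₀
  set c : Matrix (Fin n) (Fin n) ℂ → ℝ := fun B => ∑ i, ∑ j, ‖B i j‖ with hc
  have hcont : Continuous c := by
    apply continuous_finset_sum
    intro i _
    apply continuous_finset_sum
    intro j _
    exact (continuous_apply j).comp (continuous_apply i) |>.norm
  set K : Set ℂ := {μ | 0 ≤ μ.re ∧ ‖μ‖ ≤ c B₀ + 1} with hK
  have hKc : IsCompact K := by
    apply Metric.isCompact_of_isClosed_isBounded
    · exact (isClosed_le continuous_const Complex.continuous_re).inter
        (isClosed_le continuous_norm continuous_const)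
    · apply Bornology.IsBounded.subset (Metric.isBounded_closedBall
        (x := (0 : ℂ)) (r := c B₀ + 1))
      intro μ hμ
      simpa [Metric.mem_closedBall] using hμ.2
  set U : Set (ℂ × Matrix (Fin n) (Fin n) ℂ) :=
    {p | (Matrix.scalar (Fin n) p.1 - p.2).det ≠ 0} with hUdef
  have hU : IsOpen U := by
    have hf : Continuous fun p : ℂ × Matrix (Fin n) (Fin n) ℂ =>
        (Matrix.scalar (Fin n) p.1 - p.2).det := by
      apply Continuous.matrix_det
      have : (fun p : ℂ × Matrix (Fin n) (Fin n) ℂ => Matrix.scalar (Fin n) p.1 - p.2)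
          = fun p => Matrix.diagonal (fun _ => p.1) - p.2 := by
        funext p; rw [Matrix.scalar_apply]
      rw [this]
      exact (Continuous.matrix_diagonal (continuous_pi fun _ => continuous_fst)).sub
        continuous_snd
    exact isOpen_compl_singleton.preimage hf
  have hsub : K ×ˢ ({B₀} : Set (Matrix (Fin n) (Fin n) ℂ)) ⊆ U := by
    rintro ⟨μ, B⟩ ⟨hμ, hB⟩
    rcases hB with rfl
    exact hB₀ μ hμ.1
  obtain ⟨V, W, hVopen, hWopen, hKV, hBW, hVW⟩ :=
    generalized_tube_lemma hKc isCompact_singleton hU hsub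
  refine ⟨W ∩ c ⁻¹' Set.Iio (c B₀ + 1), ?_, hWopen.inter (isOpen_Iio.preimage hcont),
    hBW rfl, by simp⟩
  rintro B ⟨hBW', hBc⟩ μ hμre hdet
  have hμK : μ ∈ K := by
    refine ⟨hμre, ?_⟩
    have := eig_bound (exists_eigenvector_of_det hdet)
    have hlt : c B < c B₀ + 1 := hBc
    exact le_of_lt (lt_of_le_of_lt this hlt)
  have hmem : (μ, B) ∈ U := hVW (Set.mem_prod.2 ⟨hKV hμK, hBW'⟩)
  exact hmem hdet

lemma isOpen_hurwitz : IsOpen {A : Matrix (Fin n) (Fin n) ℝ | IsHurwitz A} := by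
  have hmap : Continuous fun A : Matrix (Fin n) (Fin n) ℝ => A.map (fun r => (r : ℂ)) :=
    Continuous.matrix_map continuous_id Complex.continuous_ofReal
  have hset : {A : Matrix (Fin n) (Fin n) ℝ | IsHurwitz A} =
      (fun A : Matrix (Fin n) (Fin n) ℝ => A.map (fun r => (r : ℂ))) ⁻¹'
      {B : Matrix (Fin n) (Fin n) ℂ |
        ∀ μ : ℂ, 0 ≤ μ.re → (Matrix.scalar (Fin n) μ - B).det ≠ 0} := by
    ext A
    constructor
    · intro hA μ hμ hdet
      have : (A.map (fun r => (r : ℂ))).charpoly.IsRoot μ := by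
        rw [Polynomial.IsRoot, eval_charpoly]; exact hdet
      exact absurd hμ (not_le.2 (hA μ this))
    · intro hA μ hroot
      by_contra h
      have hμ : 0 ≤ μ.re := not_lt.1 h
      apply hA μ hμ
      rw [← eval_charpoly]
      exact hroot
  rw [hset]
  exact isOpen_S.preimage hmap

lemma outer_mulVec {R : Type*} [CommRing R] (a b v : Fin n → R) :
    Matrix.vecMulVec a b *ᵥ v = (b ⬝ᵥ v) • a := by
  ext i
  simp [Matrix.mulVec, Matrix.vecMulVec_apply, dotProduct, Finset.sum_mul,
    Finset.mul_sum]
  ring_nf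


lemma dot_sum_right {m : ℕ} (v : Fin n → ℝ) (f : Fin m → Fin n → ℝ) :
    v ⬝ᵥ (∑ k, f k) = ∑ k, v ⬝ᵥ f k := by
  simp only [dotProduct, Finset.sum_apply, Finset.mul_sum]
  exact Finset.sum_comm

lemma dot_self_pos {v : Fin n → ℝ} (hv : v ≠ 0) : 0 < v ⬝ᵥ v := by
  rcases (Finset.sum_nonneg fun j _ => mul_self_nonneg (v j)).lt_or_eq with h | h
  · exact h
  · exact absurd (dotProduct_self_eq_zero.1 h.symm) hv

end HurwitzAux

open HurwitzAux in
theorem statement17 {n : ℕ} (hn : 1 < n) (x : Fin (n - 1) → (Fin n → ℝ))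
    (hx0 : ∀ i, x i ≠ 0) (hxorth : ∀ i j, i ≠ j → x i ⬝ᵥ x j = 0) :
    IsOpen {A : Matrix (Fin n) (Fin n) ℝ |
      IsHurwitz A ∧ ∀ i, 0 < x i ⬝ᵥ A *ᵥ x i} ∧
    {A : Matrix (Fin n) (Fin n) ℝ |
      IsHurwitz A ∧ ∀ i, 0 < x i ⬝ᵥ A *ᵥ x i}.Nonempty := by
  constructor
  · have h1 : {A : Matrix (Fin n) (Fin n) ℝ |
        IsHurwitz A ∧ ∀ i, 0 < x i ⬝ᵥ A *ᵥ x i} =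
        {A | IsHurwitz A} ∩ ⋂ i, {A | 0 < x i ⬝ᵥ A *ᵥ x i} := by
      ext A
      simp [Set.mem_iInter]
    rw [h1]
    refine isOpen_hurwitz.inter (isOpen_iInter_of_finite fun i => ?_)
    have hcont : Continuous fun A : Matrix (Fin n) (Fin n) ℝ => x i ⬝ᵥ A *ᵥ x i :=
      Continuous.dotProduct continuous_const
        (Continuous.matrix_mulVec continuous_id continuous_const)
    exact isOpen_lt continuous_const hcont
  · -- Nonemptiness
    have hn1 : n - 1 < n := by omega
    set d : Fin (n - 1) → ℝ := fun i => x i ⬝ᵥ x i with hd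
    have hdpos : ∀ i, 0 < d i := fun i => dot_self_pos (hx0 i)
    obtain ⟨w, hw0, hwx⟩ : ∃ w : Fin n → ℝ, w ≠ 0 ∧ ∀ i, x i ⬝ᵥ w = 0 := by
      let L : (Fin n → ℝ) →ₗ[ℝ] (Fin (n - 1) → ℝ) := (Matrix.of x).mulVecLin
      have hker : LinearMap.ker L ≠ ⊥ := by
        intro h
        have hinj : Function.Injective L := LinearMap.ker_eq_bot.1 h
        have hle := LinearMap.finrank_le_finrank_of_injective hinj
        rw [Module.finrank_fin_fun, Module.finrank_fin_fun] at hle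
        omega
      obtain ⟨w, hwker, hw0⟩ := (Submodule.ne_bot_iff _).1 hker
      refine ⟨w, hw0, fun i => ?_⟩
      have h2 := congrFun (LinearMap.mem_ker.1 hwker) i
      simpa [L, Matrix.mulVecLin_apply, Matrix.mulVec, dotProduct] using h2
    set s : Fin n → ℝ := ∑ i, (d i)⁻¹ • x i with hs
    have hxs : ∀ i, x i ⬝ᵥ s = 1 := by
      intro i
      rw [hs, dot_sum_right]
      rw [Finset.sum_eq_single i]
      · rw [dotProduct_smul, smul_eq_mul]
        exact inv_mul_cancel₀ (hdpos i).ne'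
      · intro j _ hj
        rw [dotProduct_smul, hxorth i j (Ne.symm hj), smul_zero]
      · intro h; exact absurd (Finset.mem_univ i) h
    have hws : w ⬝ᵥ s = 0 := by
      rw [dot_sum_right]
      apply Finset.sum_eq_zero
      intro j _
      rw [dotProduct_smul, dotProduct_comm, hwx j, smul_zero]
    have hww : 0 < w ⬝ᵥ w := dot_self_pos hw0
    set c0 : ℝ := (s ⬝ᵥ s) / (w ⬝ᵥ w) with hc0
    set a : Fin n → ℝ := s + w with ha
    set b : Fin n → ℝ := s - c0 • w with hb
    have hba : b ⬝ᵥ a = 0 := by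
      rw [hb, ha, sub_dotProduct, dotProduct_add, dotProduct_add,
        smul_dotProduct, smul_dotProduct, dotProduct_comm s w, hws, hc0]
      rw [smul_eq_mul, smul_eq_mul, div_mul_cancel₀ _ hww.ne']
      ring
    have hxa : ∀ i, x i ⬝ᵥ a = 1 := by
      intro i
      rw [ha, dotProduct_add, hxs i, hwx i, add_zero]
    have hbx : ∀ i, b ⬝ᵥ x i = 1 := by
      intro i
      rw [hb, sub_dotProduct, smul_dotProduct, dotProduct_comm s (x i),
        hxs i, dotProduct_comm w (x i), hwx i, smul_zero, sub_zero]
    set t : ℝ := (∑ i, d i) + 1 with ht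
    have htd : ∀ i, d i < t := by
      intro i
      have h1 : d i ≤ ∑ j, d j :=
        Finset.single_le_sum (fun j _ => (hdpos j).le) (Finset.mem_univ i)
      rw [ht]; linarith
    have htpos : 0 < t := lt_of_le_of_lt (hdpos ⟨0, by omega⟩).le (htd ⟨0, by omega⟩)
    refine ⟨t • Matrix.vecMulVec a b - 1, ?_, ?_⟩
    · -- Hurwitz
      intro μ hroot
      obtain ⟨v, hv0, hv⟩ := exists_eigenvector_of_isRoot hroot
      set aC : Fin n → ℂ := fun i => (a i : ℂ) with haC
      set bC : Fin n → ℂ := fun i => (b i : ℂ) with hbC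
      have hmap : (t • Matrix.vecMulVec a b - 1 : Matrix (Fin n) (Fin n) ℝ).map
          (fun r => (r : ℂ)) = (t : ℂ) • Matrix.vecMulVec aC bC - 1 := by
        ext i j
        by_cases h : i = j <;>
          simp [Matrix.map_apply, Matrix.sub_apply, Matrix.smul_apply,
            Matrix.vecMulVec_apply, Matrix.one_apply, h, haC, hbC] <;> push_cast <;> ring
      rw [hmap, Matrix.sub_mulVec, Matrix.smul_mulVec, Matrix.one_mulVec,
        outer_mulVec] at hv
      have hbaC : bC ⬝ᵥ aC = 0 := by
        have h2 : ((b ⬝ᵥ a : ℝ) : ℂ) = 0 := by rw [hba]; norm_num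
        rw [← h2]
        simp only [dotProduct, haC, hbC]
        push_cast
        rfl
      have h3 : bC ⬝ᵥ ((t : ℂ) • ((bC ⬝ᵥ v) • aC) - v) = bC ⬝ᵥ (μ • v) := by rw [hv]
      rw [dotProduct_sub, dotProduct_smul, dotProduct_smul,
        dotProduct_smul, hbaC] at h3
      have h4 : (μ + 1) * (bC ⬝ᵥ v) = 0 := by
        simp only [smul_eq_mul, mul_zero] at h3
        linear_combination -h3
      have hμ : μ = -1 := by
        rcases mul_eq_zero.1 h4 with h5 | h5
        · exact eq_neg_of_add_eq_zero_left h5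
        · rw [h5, zero_smul, smul_zero, zero_sub] at hv
          have h6 : (μ + 1) • v = 0 := by
            rw [add_smul, one_smul, ← hv]
            abel
          rcases smul_eq_zero.1 h6 with h7 | h7
          · exact eq_neg_of_add_eq_zero_left h7
          · exact absurd h7 hv0
      rw [hμ]
      norm_num
    · -- positivity
      intro i
      rw [Matrix.sub_mulVec, Matrix.smul_mulVec, Matrix.one_mulVec, outer_mulVec,
        dotProduct_sub, dotProduct_smul, dotProduct_smul,
        hbx i, hxa i]
      simp only [smul_eq_mul, one_smul, mul_one]
      have : x i ⬝ᵥ x i = d i := rfl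
      rw [this]
      linarith [htd i]
end

section
/- Let n > 1. The set of all real n×n Hurwitz matrices A for which there exist n−1 mutually orthogonal nonzero vectors x₁, …, x_{n−1} ∈ ℝⁿ satisfying ⟨xᵢ, A xᵢ⟩ > 0 for all i = 1, …, n−1 is a nonempty open subset of the space of all real n×n matrices. -/
open Matrix Polynomial

lemma my_eval_charpoly {n : ℕ} {R : Type*} [CommRing R] (M : Matrix (Fin n) (Fin n) R) (μ : R) :
    M.charpoly.eval μ = (μ • (1 : Matrix (Fin n) (Fin n) R) - M).det := by
  rw [Matrix.charpoly, show Polynomial.eval μ = (Polynomial.evalRingHom μ : R[X] → R) from rfl,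
    RingHom.map_det]
  congr 1
  ext i j
  by_cases h : i = j
  · subst h
    simp [Matrix.charmatrix_apply_eq, Matrix.map_apply, Matrix.one_apply]
  · simp [Matrix.charmatrix_apply_ne _ _ _ h, Matrix.map_apply, Matrix.one_apply_ne h]

lemma my_root_bound {n : ℕ} (B : Matrix (Fin n) (Fin n) ℂ) {μ : ℂ}
    (h : (μ • (1 : Matrix (Fin n) (Fin n) ℂ) - B).det = 0) :
    ∃ i, ‖μ‖ ≤ ∑ j, ‖B i j‖ := by
  obtain ⟨v, hv0, hv⟩ := Matrix.exists_mulVec_eq_zero_iff.2 h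
  have hBv : B *ᵥ v = μ • v := by
    rw [Matrix.sub_mulVec, Matrix.smul_mulVec, Matrix.one_mulVec, sub_eq_zero] at hv
    exact hv.symm
  obtain ⟨k, hk⟩ := Function.ne_iff.1 hv0
  obtain ⟨i, -, hi⟩ := Finset.exists_max_image Finset.univ (fun i => ‖v i‖)
    ⟨k, Finset.mem_univ k⟩
  have hvi : 0 < ‖v i‖ :=
    lt_of_lt_of_le (norm_pos_iff.2 hk) (hi k (Finset.mem_univ k))
  refine ⟨i, le_of_mul_le_mul_right ?_ hvi⟩
  have h1 : ‖μ‖ * ‖v i‖ = ‖(B *ᵥ v) i‖ := by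
    rw [hBv]; simp [norm_smul]
  rw [h1]
  calc ‖(B *ᵥ v) i‖ = ‖∑ j, B i j * v j‖ := by rfl
    _ ≤ ∑ j, ‖B i j * v j‖ := norm_sum_le _ _
    _ ≤ ∑ j, ‖B i j‖ * ‖v i‖ := by
        refine Finset.sum_le_sum fun j _ => ?_
        rw [norm_mul]
        exact mul_le_mul_of_nonneg_left (hi j (Finset.mem_univ j)) (norm_nonneg _)
    _ = (∑ j, ‖B i j‖) * ‖v i‖ := by rw [Finset.sum_mul]

lemma my_cont {n : ℕ} (v w : Fin n → ℝ) :
    Continuous fun A : Matrix (Fin n) (Fin n) ℝ => v ⬝ᵥ A *ᵥ w := by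
  simp only [dotProduct, Matrix.mulVec]
  refine continuous_finset_sum _ fun i _ => Continuous.mul continuous_const ?_
  exact continuous_finset_sum _ fun j _ =>
    (continuous_id.matrix_elem i j).mul continuous_const

lemma my_isOpen_hurwitz {n : ℕ} : IsOpen {A : Matrix (Fin n) (Fin n) ℝ | IsHurwitz A} := by
  rw [isOpen_iff_mem_nhds]
  intro A₀ h₀
  set R : ℝ := (∑ i, ∑ j, |A₀ i j|) + n with hR
  set K : Set ℂ := {z : ℂ | 0 ≤ z.re} ∩ Metric.closedBall 0 R with hK
  have hKc : IsCompact K :=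
    IsCompact.inter_left (isCompact_closedBall 0 R)
      (isClosed_le continuous_const Complex.continuous_re)
  have hf : Continuous fun p : Matrix (Fin n) (Fin n) ℝ × ℂ =>
      (p.2 • (1 : Matrix (Fin n) (Fin n) ℂ) - p.1.map (fun r => (r : ℂ))).det := by
    refine Continuous.matrix_det (Continuous.sub (continuous_snd.smul continuous_const) ?_)
    exact Continuous.matrix_map continuous_fst Complex.continuous_ofReal
  have hU : IsOpen {p : Matrix (Fin n) (Fin n) ℝ × ℂ |
      (p.2 • (1 : Matrix (Fin n) (Fin n) ℂ) - p.1.map (fun r => (r : ℂ))).det ≠ 0} :=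
    isOpen_compl_iff.2 (isClosed_singleton.preimage hf)
  have hsub : ({A₀} : Set (Matrix (Fin n) (Fin n) ℝ)) ×ˢ K ⊆ {p |
      (p.2 • (1 : Matrix (Fin n) (Fin n) ℂ) - p.1.map (fun r => (r : ℂ))).det ≠ 0} := by
    rintro ⟨A, z⟩ ⟨hA, hz⟩ hdet
    simp only [Set.mem_singleton_iff] at hA
    rw [hA] at hdet
    have hroot : Polynomial.eval z (A₀.map (fun r => (r : ℂ))).charpoly = 0 := by
      rw [my_eval_charpoly]; exact hdet
    exact absurd (h₀ z hroot) (not_lt.2 hz.1)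
  obtain ⟨u, w, hu, -, hA₀u, hKw, huw⟩ :=
    generalized_tube_lemma isCompact_singleton hKc hU hsub
  have hW₁ : IsOpen {A : Matrix (Fin n) (Fin n) ℝ | ∀ i j, |A i j - A₀ i j| < 1} := by
    have : {A : Matrix (Fin n) (Fin n) ℝ | ∀ i j, |A i j - A₀ i j| < 1} =
        ⋂ i, ⋂ j, {A : Matrix (Fin n) (Fin n) ℝ | |A i j - A₀ i j| < 1} := by
      ext A; simp
    rw [this]
    refine isOpen_iInter_of_finite fun i => isOpen_iInter_of_finite fun j => ?_
    exact isOpen_lt (((continuous_id.matrix_elem i j).sub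
      continuous_const).abs) continuous_const
  refine Filter.mem_of_superset
    ((hu.inter hW₁).mem_nhds ⟨hA₀u rfl, fun i j => by simp⟩) ?_
  rintro A ⟨hAu, hAW⟩ μ hroot
  by_contra hre
  push_neg at hre
  have hdet : (μ • (1 : Matrix (Fin n) (Fin n) ℂ) - A.map (fun r => (r : ℂ))).det = 0 := by
    rw [← my_eval_charpoly]; exact hroot
  obtain ⟨i, hbound⟩ := my_root_bound _ hdet
  have hμK : μ ∈ K := by
    refine ⟨hre, ?_⟩
    rw [Metric.mem_closedBall, dist_zero_right]
    refine hbound.trans ?_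
    have h2 : ∑ j, ‖(A.map (fun r => (r : ℂ))) i j‖ = ∑ j, |A i j| := by
      refine Finset.sum_congr rfl fun j _ => ?_
      simp [Matrix.map_apply, Complex.norm_real, Real.norm_eq_abs]
    rw [h2]
    have h3 : ∀ j, |A i j| ≤ |A₀ i j| + 1 := fun j => by
      have := hAW i j
      have h4 : |A i j| - |A₀ i j| ≤ |A i j - A₀ i j| := abs_sub_abs_le_abs_sub _ _
      linarith
    calc ∑ j, |A i j| ≤ ∑ j, (|A₀ i j| + 1) := Finset.sum_le_sum fun j _ => h3 j
      _ = (∑ j, |A₀ i j|) + n := by rw [Finset.sum_add_distrib]; simp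
      _ ≤ R := by
          rw [hR]
          refine add_le_add_left ?_ _
          refine Finset.single_le_sum (f := fun i => ∑ j, |A₀ i j|) ?_ (Finset.mem_univ i)
          intro k _
          exact Finset.sum_nonneg fun j _ => abs_nonneg _
  exact huw (Set.mk_mem_prod hAu (hKw hμK)) hdet

theorem statement18 {n : ℕ} (hn : 1 < n) :
    IsOpen {A : Matrix (Fin n) (Fin n) ℝ | IsHurwitz A ∧
      ∃ x : Fin (n - 1) → (Fin n → ℝ), (∀ i, x i ≠ 0) ∧
        (∀ i j, i ≠ j → x i ⬝ᵥ x j = 0) ∧ (∀ i, 0 < x i ⬝ᵥ A *ᵥ x i)} ∧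
    {A : Matrix (Fin n) (Fin n) ℝ | IsHurwitz A ∧
      ∃ x : Fin (n - 1) → (Fin n → ℝ), (∀ i, x i ≠ 0) ∧
        (∀ i j, i ≠ j → x i ⬝ᵥ x j = 0) ∧ (∀ i, 0 < x i ⬝ᵥ A *ᵥ x i)}.Nonempty := by
  constructor
  · -- openness
    have hdecomp : {A : Matrix (Fin n) (Fin n) ℝ | IsHurwitz A ∧
        ∃ x : Fin (n - 1) → (Fin n → ℝ), (∀ i, x i ≠ 0) ∧
          (∀ i j, i ≠ j → x i ⬝ᵥ x j = 0) ∧ (∀ i, 0 < x i ⬝ᵥ A *ᵥ x i)} =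
        {A : Matrix (Fin n) (Fin n) ℝ | IsHurwitz A} ∩
        ⋃ x : {x : Fin (n - 1) → (Fin n → ℝ) // (∀ i, x i ≠ 0) ∧
            (∀ i j, i ≠ j → x i ⬝ᵥ x j = 0)},
          ⋂ i, {A : Matrix (Fin n) (Fin n) ℝ | 0 < x.1 i ⬝ᵥ A *ᵥ x.1 i} := by
      ext A
      simp only [Set.mem_setOf_eq, Set.mem_inter_iff, Set.mem_iUnion, Set.mem_iInter]
      constructor
      · rintro ⟨hH, x, h1, h2, h3⟩
        exact ⟨hH, ⟨x, h1, h2⟩, h3⟩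
      · rintro ⟨hH, ⟨⟨x, h1, h2⟩, h3⟩⟩
        exact ⟨hH, x, h1, h2, h3⟩
    rw [hdecomp]
    refine my_isOpen_hurwitz.inter (isOpen_iUnion fun x => ?_)
    exact isOpen_iInter_of_finite fun i =>
      isOpen_lt continuous_const (my_cont (x.1 i) (x.1 i))
  · -- nonemptiness
    obtain ⟨m, rfl⟩ : ∃ m, n = m + 2 := ⟨n - 2, by omega⟩
    set u : Fin (m + 2) → ℝ := fun k => if (k : ℕ) < m + 1 then 1 else (m + 1 : ℝ) with hu
    set v : Fin (m + 2) → ℝ := fun k => if (k : ℕ) < m + 1 then 1 else -1 with hv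
    set A : Matrix (Fin (m + 2)) (Fin (m + 2)) ℝ :=
      Matrix.of (fun i j => u i * v j) - (2⁻¹ : ℝ) • 1 with hA
    refine ⟨A, ?_, ?_⟩
    · -- Hurwitz
      intro μ hroot
      set Nc : Matrix (Fin (m + 2)) (Fin (m + 2)) ℂ :=
        Matrix.of (fun i j => (u i : ℂ) * (v j : ℂ)) with hNc
      have hB : A.map (fun r => (r : ℂ)) = Nc - (2⁻¹ : ℂ) • 1 := by
        ext i j
        by_cases h : i = j <;>
          simp [hA, hNc, Matrix.map_apply, Matrix.one_apply, h] <;> push_cast <;> ring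
      have hsum : ∑ k : Fin (m + 2), (v k : ℂ) * (u k : ℂ) = 0 := by
        rw [Fin.sum_univ_castSucc]
        have hterm : ∀ k : Fin (m + 1),
            ((v k.castSucc : ℝ) : ℂ) * ((u k.castSucc : ℝ) : ℂ) = 1 := by
          intro k
          have hk : ((k.castSucc : Fin (m + 2)) : ℕ) < m + 1 := by simpa using k.isLt
          simp [hu, hv, hk, k.is_le]
        rw [Finset.sum_congr rfl fun k _ => hterm k, Finset.sum_const]
        have h2 : ¬ ((Fin.last (m + 1) : ℕ) < m + 1) := by simp
        simp only [hu, hv, h2, if_neg, Fin.val_last]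
        push_cast
        simp
      have hNN : Nc * Nc = 0 := by
        ext i j
        simp only [hNc, Matrix.mul_apply, Matrix.of_apply, Matrix.zero_apply]
        calc ∑ k, ((u i : ℂ) * (v k : ℂ)) * ((u k : ℂ) * (v j : ℂ))
            = ∑ k, ((u i : ℂ) * (v j : ℂ)) * ((v k : ℂ) * (u k : ℂ)) :=
              Finset.sum_congr rfl fun k _ => by ring
          _ = ((u i : ℂ) * (v j : ℂ)) * ∑ k, (v k : ℂ) * (u k : ℂ) := by
              rw [Finset.mul_sum]
          _ = 0 := by rw [hsum, mul_zero]
      have hdet : (μ • (1 : Matrix (Fin (m + 2)) (Fin (m + 2)) ℂ)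
          - A.map (fun r => (r : ℂ))).det = 0 := by
        rw [← my_eval_charpoly]; exact hroot
      have hμ : μ = -2⁻¹ := by
        by_contra hμne
        have hc : μ + 2⁻¹ ≠ 0 := fun h => hμne (by linear_combination h)
        set c : ℂ := μ + 2⁻¹ with hcdef
        have hM : μ • (1 : Matrix (Fin (m + 2)) (Fin (m + 2)) ℂ)
            - A.map (fun r => (r : ℂ)) = c • 1 - Nc := by
          rw [hB, hcdef, add_smul]
          abel
        have hinv : (c • (1 : Matrix (Fin (m + 2)) (Fin (m + 2)) ℂ) - Nc) *
            (c⁻¹ • 1 + (c⁻¹ * c⁻¹) • Nc) = 1 := by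
          have e1 : c * (c⁻¹ * c⁻¹) = c⁻¹ := by field_simp
          rw [sub_mul, mul_add, mul_add]
          simp only [smul_mul_assoc, mul_smul_comm, smul_smul, one_mul, mul_one,
            hNN, smul_zero, add_zero]
          have e2 : c⁻¹ * c⁻¹ * c = c⁻¹ := by field_simp
          rw [inv_mul_cancel₀ hc, one_smul, e2]
          abel
        have h1 : (c • (1 : Matrix (Fin (m + 2)) (Fin (m + 2)) ℂ) - Nc).det *
            (c⁻¹ • (1 : Matrix (Fin (m + 2)) (Fin (m + 2)) ℂ) + (c⁻¹ * c⁻¹) • Nc).det = 1 := by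
          rw [← Matrix.det_mul, hinv, Matrix.det_one]
        rw [hM] at hdet
        rw [hdet, zero_mul] at h1
        exact zero_ne_one h1
      rw [hμ]
      norm_num
    · -- the vectors
      refine ⟨fun i : Fin (m + 1) => Pi.single (Fin.castSucc i) (1 : ℝ), ?_, ?_, ?_⟩
      · intro i h
        have := congrFun h (Fin.castSucc i)
        simp at this
      · intro i j hij
        have hne : (Fin.castSucc i : Fin (m + 2)) ≠ Fin.castSucc j := by
          simpa [Fin.castSucc_inj] using hij
        show Pi.single (Fin.castSucc i) (1 : ℝ) ⬝ᵥ Pi.single (Fin.castSucc j) 1 = 0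
        rw [single_dotProduct, one_mul, Pi.single_eq_of_ne hne]
      · intro i
        show (0:ℝ) < Pi.single (Fin.castSucc i) (1 : ℝ) ⬝ᵥ A *ᵥ Pi.single (Fin.castSucc i) 1
        rw [Matrix.mulVec_single, single_dotProduct]
        have hlt : ((Fin.castSucc i : Fin (m + 2)) : ℕ) < m + 1 := by simpa using i.isLt
        simp [hA, hu, hv, Matrix.one_apply, hlt, (show (i : ℕ) ≤ m by have := i.isLt; omega)]
        norm_num
end
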